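/- arXiv:1908.02174 — 12 statements merged into one kernel-verified Lean document; each statement's English description precedes it below -/
import Mathlib

section
/- Let G = (U, W, E) be a convex bipartite graph with |U| ≥ 2 and |W| ≥ 2, and let D be a minimal connected dominating set of G. If i and j are two distinct vertices of U with N(i) ⊆ N(j), then at most one of i, j belongs to D. -/
/-!
If both `i` and `j` lay in `D`, then `D \ {i}` would still be a connected dominating set,
contradicting minimality. Every vertex dominated by `i` is dominated by `j`; `i`
itself has a neighbor in the connected set `D ∋ j`; and collapsing `i` onto `j` maps the
graph induced on `D` onto the one induced on `D \ {i}`, so the latter stays connected.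
-/

/-- `D` is a dominating set of `G`: every vertex lies in `D` or has a neighbor in `D`. -/
def IsDominatingSet {V : Type*} (G : SimpleGraph V) (D : Set V) : Prop :=
  ∀ v : V, v ∈ D ∨ ∃ u ∈ D, G.Adj u v

/-- `D` is a connected dominating set of `G`. -/
def IsConnectedDominatingSet {V : Type*} (G : SimpleGraph V) (D : Set V) : Prop :=
  IsDominatingSet G D ∧ (G.induce D).Connected

/-- `D` is a minimal connected dominating set of `G`. -/
def IsMinimalCDS {V : Type*} (G : SimpleGraph V) (D : Set V) : Prop :=
  IsConnectedDominatingSet G D ∧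
    ∀ D' : Set V, D' ⊂ D → ¬ IsConnectedDominatingSet G D'

/-- A graph on `Fin a ⊕ Fin m` is convex bipartite (with parts `U = Fin a` and
`W = Fin m`, the latter carrying its natural linear order) if there are no edges inside
either part and the neighborhood of every vertex of `U` is an interval of `W`. -/
def ConvexBipartite {a m : ℕ} (G : SimpleGraph (Fin a ⊕ Fin m)) : Prop :=
  (∀ x y : Fin a, ¬ G.Adj (Sum.inl x) (Sum.inl y)) ∧
  (∀ i j : Fin m, ¬ G.Adj (Sum.inr i) (Sum.inr j)) ∧
  (∀ u : Fin a, ∀ i j k : Fin m, i ≤ j → j ≤ k →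
    G.Adj (Sum.inl u) (Sum.inr i) → G.Adj (Sum.inl u) (Sum.inr k) →
    G.Adj (Sum.inl u) (Sum.inr j))

section

open Classical

variable {V : Type*} {G : SimpleGraph V} {D : Set V} {u v : V}

theorem IsDominatingSet.diff_singleton (hD : IsDominatingSet G D) (hv : v ∈ D) (huv : u ≠ v)
    (hsub : G.neighborSet u ⊆ G.neighborSet v) (hu : ∃ w ∈ D, G.Adj w u) :
    IsDominatingSet G (D \ {u}) := by
  intro x
  by_cases hxu : x = u
  · subst hxu
    obtain ⟨w, hw, hwx⟩ := hu
    exact Or.inr ⟨w, ⟨hw, hwx.ne⟩, hwx⟩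
  rcases hD x with hx | ⟨w, hw, hwx⟩
  · exact Or.inl ⟨hx, hxu⟩
  by_cases hwu : w = u
  · subst hwu
    exact Or.inr ⟨v, ⟨hv, huv.symm⟩, hsub hwx⟩
  · exact Or.inr ⟨w, ⟨hw, hwu⟩, hwx⟩

noncomputable def collapseTo (hv : v ∈ D) (huv : u ≠ v) (x : D) : (D \ {u} : Set V) :=
  if hx : x.1 = u then ⟨v, hv, huv.symm⟩ else ⟨x.1, x.2, hx⟩

theorem collapseTo_surjective (hv : v ∈ D) (huv : u ≠ v) :
    Function.Surjective (collapseTo hv huv) :=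
  fun y => ⟨⟨y.1, y.2.1⟩, dif_neg y.2.2⟩

noncomputable def collapseToHom (hv : v ∈ D) (huv : u ≠ v)
    (hsub : G.neighborSet u ⊆ G.neighborSet v) :
    G.induce D →g G.induce (D \ {u}) where
  toFun := collapseTo hv huv
  map_rel' {x y} hxy := by
    have hxy : G.Adj x.1 y.1 := hxy
    change G.Adj (collapseTo hv huv x).1 (collapseTo hv huv y).1
    unfold collapseTo
    split_ifs with hxu hyu hyu
    · exact absurd (hxu.trans hyu.symm) hxy.ne
    · exact hsub (hxu ▸ hxy)
    · exact (hsub (hyu ▸ hxy.symm)).symm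
    · exact hxy

theorem SimpleGraph.Connected.induce_diff_singleton (hD : (G.induce D).Connected) (hv : v ∈ D)
    (huv : u ≠ v) (hsub : G.neighborSet u ⊆ G.neighborSet v) :
    (G.induce (D \ {u})).Connected :=
  hD.map (collapseToHom hv huv hsub) (collapseTo_surjective hv huv)

theorem SimpleGraph.Connected.exists_adj_of_mem_induce (hD : (G.induce D).Connected)
    (hu : u ∈ D) (hv : v ∈ D) (huv : u ≠ v) : ∃ w ∈ D, G.Adj w u := by
  have : Nontrivial D := ⟨⟨u, hu⟩, ⟨v, hv⟩, fun h => huv (congrArg Subtype.val h)⟩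
  obtain ⟨w, huw⟩ := hD.preconnected.exists_adj_of_nontrivial ⟨u, hu⟩
  exact ⟨w.1, w.2, huw.symm⟩

theorem IsMinimalCDS.not_mem_and_mem_of_neighborSet_subset (hD : IsMinimalCDS G D)
    (huv : u ≠ v) (hsub : G.neighborSet u ⊆ G.neighborSet v) : ¬ (u ∈ D ∧ v ∈ D) := by
  rintro ⟨hu, hv⟩
  obtain ⟨⟨hdom, hconn⟩, hmin⟩ := hD
  refine hmin (D \ {u}) (Set.sdiff_singleton_ssubset.mpr hu) ⟨?_, ?_⟩
  · exact hdom.diff_singleton hv huv hsub (hconn.exists_adj_of_mem_induce hu hv huv)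
  · exact hconn.induce_diff_singleton hv huv hsub

end

theorem mcds_nested_neighborhoods_general {a m : ℕ}
    (G : SimpleGraph (Fin a ⊕ Fin m))
    (D : Set (Fin a ⊕ Fin m)) (hD : IsMinimalCDS G D)
    (i j : Fin a) (hij : i ≠ j)
    (hsub : G.neighborSet (Sum.inl i) ⊆ G.neighborSet (Sum.inl j)) :
    ¬ (Sum.inl i ∈ D ∧ Sum.inl j ∈ D) :=
  hD.not_mem_and_mem_of_neighborSet_subset (Sum.inl_injective.ne hij) hsub

/-- In a convex bipartite graph with `|U| ≥ 2` and `|W| ≥ 2`, if `D` is a minimal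
connected dominating set and `i ≠ j` are vertices of `U` with `N(i) ⊆ N(j)`,
then at most one of `i, j` belongs to `D`. -/
theorem mcds_nested_neighborhoods {a m : ℕ} (ha : 2 ≤ a) (hm : 2 ≤ m)
    (G : SimpleGraph (Fin a ⊕ Fin m)) (hG : ConvexBipartite G)
    (D : Set (Fin a ⊕ Fin m)) (hD : IsMinimalCDS G D)
    (i j : Fin a) (hij : i ≠ j)
    (hsub : G.neighborSet (Sum.inl i) ⊆ G.neighborSet (Sum.inl j)) :
    ¬ (Sum.inl i ∈ D ∧ Sum.inl j ∈ D) :=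
  mcds_nested_neighborhoods_general G D hD i j hij hsub
end

section
/- Let G = (U, W, E) be a convex bipartite graph with |U| ≥ 2 and |W| ≥ 2, and let D be a minimal connected dominating set of G. If i and j are two distinct vertices of U whose neighbor intervals satisfy r(I_i) = r(I_j) or l(I_i) = l(I_j) (i.e. the intervals share a right endpoint or share a left endpoint), then at most one of i, j belongs to D. -/
section

variable {V : Type*} {G : SimpleGraph V} {D : Set V} {u v : V}

lemma SimpleGraph.Connected.induce_diff_singleton_of_neighborSet_subset
    (hD : (G.induce D).Connected) (hu : u ∈ D) (huv : u ≠ v)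
    (hN : G.neighborSet v ⊆ G.neighborSet u) :
    (G.induce (D \ {v})).Connected := by
  classical
  have hu' : u ∈ D \ {v} := ⟨hu, huv⟩
  let retract : D → ↥(D \ {v}) := fun x =>
    if hx : x.1 = v then ⟨u, hu'⟩ else ⟨x, x.2, hx⟩
  have retract_of_ne : ∀ x : D, ∀ hx : x.1 ≠ v, retract x = ⟨x, x.2, hx⟩ :=
    fun x hx => dif_neg hx
  have retract_of_eq : ∀ x : D, x.1 = v → retract x = ⟨u, hu'⟩ := fun x hx => dif_pos hx
  refine hD.map ⟨retract, fun {x y} hxy => ?_⟩ fun y =>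
    ⟨⟨y, y.2.1⟩, retract_of_ne ⟨y, y.2.1⟩ y.2.2⟩
  change G.Adj x y at hxy
  change G.Adj (retract x) (retract y)
  by_cases hx : x.1 = v <;> by_cases hy : y.1 = v
  · exact absurd (hx.trans hy.symm) hxy.ne
  · rw [retract_of_eq x hx, retract_of_ne y hy]
    exact hN (hx ▸ hxy)
  · rw [retract_of_ne x hx, retract_of_eq y hy]
    exact (hN (hy ▸ hxy.symm)).symm
  · rw [retract_of_ne x hx, retract_of_ne y hy]
    exact hxy

lemma IsDominatingSet.diff_singleton_of_neighborSet_subset (hDom : IsDominatingSet G D)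
    (hv : ∃ w ∈ D, G.Adj w v) (hu : u ∈ D) (huv : u ≠ v)
    (hN : G.neighborSet v ⊆ G.neighborSet u) : IsDominatingSet G (D \ {v}) := by
  intro x
  by_cases hxv : x = v
  · subst hxv
    obtain ⟨w, hw, hwx⟩ := hv
    exact .inr ⟨w, ⟨hw, hwx.ne⟩, hwx⟩
  rcases hDom x with hx | ⟨w, hw, hwx⟩
  · exact .inl ⟨hx, hxv⟩
  by_cases hwv : w = v
  · exact .inr ⟨u, ⟨hu, huv⟩, hN (hwv ▸ hwx)⟩
  · exact .inr ⟨w, ⟨hw, hwv⟩, hwx⟩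

lemma IsConnectedDominatingSet.diff_singleton_of_neighborSet_subset
    (hD : IsConnectedDominatingSet G D) (hu : u ∈ D) (hv : v ∈ D) (huv : u ≠ v)
    (hN : G.neighborSet v ⊆ G.neighborSet u) : IsConnectedDominatingSet G (D \ {v}) := by
  have : Nontrivial D := ⟨⟨⟨u, hu⟩, ⟨v, hv⟩, Subtype.coe_ne_coe.mp huv⟩⟩
  obtain ⟨w, hvw⟩ := hD.2.preconnected.exists_adj_of_nontrivial ⟨v, hv⟩
  exact ⟨hD.1.diff_singleton_of_neighborSet_subset ⟨w, w.2, hvw.symm⟩ hu huv hN,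
    hD.2.induce_diff_singleton_of_neighborSet_subset hu huv hN⟩

lemma IsMinimalCDS.notMem_of_neighborSet_subset (hD : IsMinimalCDS G D) (hu : u ∈ D)
    (huv : u ≠ v) (hN : G.neighborSet v ⊆ G.neighborSet u) : v ∉ D := fun hv =>
  hD.2 _ (Set.sdiff_singleton_ssubset.mpr hv)
    (hD.1.diff_singleton_of_neighborSet_subset hu hv huv hN)

end

lemma Set.OrdConnected.subset_or_subset_of_isGreatest {α : Type*} [LinearOrder α]
    {s t : Set α} {r : α} (hs : s.OrdConnected) (ht : t.OrdConnected)
    (hsr : IsGreatest s r) (htr : IsGreatest t r) : s ⊆ t ∨ t ⊆ s := by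
  by_contra! h
  obtain ⟨x, hxs, hxt⟩ := Set.not_subset.mp h.1
  obtain ⟨y, hyt, hys⟩ := Set.not_subset.mp h.2
  rcases le_total x y with hxy | hyx
  · exact hys (hs.out hxs hsr.1 ⟨hxy, htr.2 hyt⟩)
  · exact hxt (ht.out hyt htr.1 ⟨hyx, hsr.2 hxs⟩)

lemma Set.OrdConnected.subset_or_subset_of_isLeast {α : Type*} [LinearOrder α]
    {s t : Set α} {l : α} (hs : s.OrdConnected) (ht : t.OrdConnected)
    (hsl : IsLeast s l) (htl : IsLeast t l) : s ⊆ t ∨ t ⊆ s :=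
  hs.dual.subset_or_subset_of_isGreatest ht.dual hsl htl

namespace ConvexBipartite

variable {a m : ℕ} {G : SimpleGraph (Fin a ⊕ Fin m)}

lemma ordConnected_neighbors (hG : ConvexBipartite G) (u : Fin a) :
    {w : Fin m | G.Adj (Sum.inl u) (Sum.inr w)}.OrdConnected :=
  ⟨fun _ hi _ hk _ hj => hG.2.2 u _ _ _ hj.1 hj.2 hi hk⟩

lemma neighborSet_inl_subset (hG : ConvexBipartite G) {i j : Fin a}
    (h : {w : Fin m | G.Adj (Sum.inl j) (Sum.inr w)} ⊆ {w | G.Adj (Sum.inl i) (Sum.inr w)}) :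
    G.neighborSet (Sum.inl j) ⊆ G.neighborSet (Sum.inl i)
  | Sum.inl x, hx => absurd hx (hG.1 j x)
  | Sum.inr _, hw => h hw

end ConvexBipartite

theorem mcds_shared_endpoint_general {a m : ℕ}
    (G : SimpleGraph (Fin a ⊕ Fin m)) (hG : ConvexBipartite G)
    (D : Set (Fin a ⊕ Fin m)) (hD : IsMinimalCDS G D)
    (i j : Fin a) (hij : i ≠ j)
    (hend : (∃ r : Fin m,
        IsGreatest {w : Fin m | G.Adj (Sum.inl i) (Sum.inr w)} r ∧
        IsGreatest {w : Fin m | G.Adj (Sum.inl j) (Sum.inr w)} r) ∨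
      (∃ l : Fin m,
        IsLeast {w : Fin m | G.Adj (Sum.inl i) (Sum.inr w)} l ∧
        IsLeast {w : Fin m | G.Adj (Sum.inl j) (Sum.inr w)} l)) :
    ¬ (Sum.inl i ∈ D ∧ Sum.inl j ∈ D) := by
  rintro ⟨hi, hj⟩
  have hN := hG.ordConnected_neighbors
  have hnested : {w | G.Adj (Sum.inl j) (Sum.inr w)} ⊆ {w | G.Adj (Sum.inl i) (Sum.inr w)} ∨
      {w | G.Adj (Sum.inl i) (Sum.inr w)} ⊆ {w | G.Adj (Sum.inl j) (Sum.inr w)} := by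
    rcases hend with ⟨r, hri, hrj⟩ | ⟨l, hli, hlj⟩
    · exact (hN j).subset_or_subset_of_isGreatest (hN i) hrj hri
    · exact (hN j).subset_or_subset_of_isLeast (hN i) hlj hli
  have hne : (Sum.inl i : Fin a ⊕ Fin m) ≠ Sum.inl j := Sum.inl_injective.ne hij
  rcases hnested with h | h
  · exact hD.notMem_of_neighborSet_subset hi hne (hG.neighborSet_inl_subset h) hj
  · exact hD.notMem_of_neighborSet_subset hj hne.symm (hG.neighborSet_inl_subset h) hi

/-- In a convex bipartite graph with `|U| ≥ 2` and `|W| ≥ 2`, if `D` is a minimal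
connected dominating set and `i ≠ j` are vertices of `U` whose neighbor intervals
share their right endpoint or share their left endpoint, then at most one of
`i, j` belongs to `D`. -/
theorem mcds_shared_endpoint {a m : ℕ} (ha : 2 ≤ a) (hm : 2 ≤ m)
    (G : SimpleGraph (Fin a ⊕ Fin m)) (hG : ConvexBipartite G)
    (D : Set (Fin a ⊕ Fin m)) (hD : IsMinimalCDS G D)
    (i j : Fin a) (hij : i ≠ j)
    (hend : (∃ r : Fin m,
        IsGreatest {w : Fin m | G.Adj (Sum.inl i) (Sum.inr w)} r ∧
        IsGreatest {w : Fin m | G.Adj (Sum.inl j) (Sum.inr w)} r) ∨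
      (∃ l : Fin m,
        IsLeast {w : Fin m | G.Adj (Sum.inl i) (Sum.inr w)} l ∧
        IsLeast {w : Fin m | G.Adj (Sum.inl j) (Sum.inr w)} l)) :
    ¬ (Sum.inl i ∈ D ∧ Sum.inl j ∈ D) :=
  mcds_shared_endpoint_general G hG D hD i j hij hend
end

section
/- Let G = (U, W, E) be a convex bipartite graph with |U| ≥ 2 and |W| ≥ 2, with W ordered as w_1 < w_2 < ... < w_{|W|}, and let D be a minimal connected dominating set of G. Then for every index i with 1 ≤ i ≤ |W| − 1 there exists a vertex u ∈ D ∩ U that is adjacent to both w_i and w_{i+1}. -/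
theorem IsConnectedDominatingSet.exists_adj_mem_not_mem {V : Type*} {G : SimpleGraph V}
    {D S : Set V} (hD : IsConnectedDominatingSet G D) {x w : V} (hxD : x ∈ D) (hxS : x ∈ S)
    (hwS : w ∉ S) : ∃ v ∈ D, v ∈ S ∧ ∃ v' ∉ S, G.Adj v v' := by
  obtain ⟨y, hyD, hyw⟩ : ∃ y ∈ D, y = w ∨ G.Adj y w := by
    rcases hD.1 w with hw | ⟨y, hyD, hyw⟩
    exacts [⟨w, hw, .inl rfl⟩, ⟨y, hyD, .inr hyw⟩]
  by_cases hyS : y ∈ S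
  · rcases hyw with rfl | hyw
    exacts [absurd hyS hwS, ⟨y, hyD, hyS, w, hwS, hyw⟩]
  · obtain ⟨p⟩ := hD.2.preconnected ⟨x, hxD⟩ ⟨y, hyD⟩
    obtain ⟨d, -, hdS, hd'S⟩ :=
      p.exists_boundary_dart (Subtype.val ⁻¹' S) hxS hyS
    exact ⟨d.fst, d.fst.2, hdS, d.snd, hd'S, d.adj⟩

section ConvexBipartite

variable {a m : ℕ} {G : SimpleGraph (Fin a ⊕ Fin m)}

def lowerClosedNbhd (G : SimpleGraph (Fin a ⊕ Fin m)) (i : Fin m) : Set (Fin a ⊕ Fin m) :=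
  {v | ∃ j ≤ i, v = Sum.inr j ∨ G.Adj v (Sum.inr j)}

theorem ConvexBipartite.adj_consecutive_of_adj_of_adj (hG : ConvexBipartite G) {u : Fin a}
    {i j k : Fin m} (h : (i : ℕ) + 1 < m) (hji : j ≤ i) (hik : i < k)
    (hj : G.Adj (Sum.inl u) (Sum.inr j)) (hk : G.Adj (Sum.inl u) (Sum.inr k)) :
    G.Adj (Sum.inl u) (Sum.inr i) ∧ G.Adj (Sum.inl u) (Sum.inr (⟨(i : ℕ) + 1, h⟩ : Fin m)) :=
  ⟨hG.2.2 u j i k hji hik.le hj hk,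
    hG.2.2 u j _ k (Fin.le_def.2 (Nat.le_succ_of_le hji)) (Fin.le_def.2 (Fin.lt_def.1 hik)) hj hk⟩

theorem ConvexBipartite.inr_not_mem_lowerClosedNbhd (hG : ConvexBipartite G) {i k : Fin m}
    (hik : i < k) : Sum.inr k ∉ lowerClosedNbhd G i := by
  rintro ⟨j, hji, hkj | hkj⟩
  · exact (Sum.inr_injective hkj ▸ hik).not_ge hji
  · exact hG.2.1 k j hkj

theorem ConvexBipartite.exists_adj_consecutive_of_adj_lowerClosedNbhd
    (hG : ConvexBipartite G) {i : Fin m} (h : (i : ℕ) + 1 < m) {v v' : Fin a ⊕ Fin m}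
    (hv : v ∈ lowerClosedNbhd G i) (hv' : v' ∉ lowerClosedNbhd G i) (hvv' : G.Adj v v') :
    ∃ u : Fin a, v = Sum.inl u ∧ G.Adj (Sum.inl u) (Sum.inr i) ∧
      G.Adj (Sum.inl u) (Sum.inr (⟨(i : ℕ) + 1, h⟩ : Fin m)) := by
  obtain ⟨j, hji, rfl | hvj⟩ := hv
  · exact absurd ⟨j, hji, .inr hvv'.symm⟩ hv'
  rcases v with u | j'
  swap
  · exact absurd hvj (hG.2.1 j' j)
  rcases v' with u' | k
  · exact absurd hvv' (hG.1 u u')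
  have hik : i < k := lt_of_not_ge fun hki => hv' ⟨k, hki, .inl rfl⟩
  exact ⟨u, rfl, hG.adj_consecutive_of_adj_of_adj h hji hik hvj hvv'⟩

end ConvexBipartite

theorem mcds_consecutive_common_neighbor_general {a m : ℕ}
    (G : SimpleGraph (Fin a ⊕ Fin m)) (hG : ConvexBipartite G)
    (D : Set (Fin a ⊕ Fin m)) (hD : IsMinimalCDS G D) :
    ∀ i : Fin m, ∀ h : (i : ℕ) + 1 < m,
      ∃ u : Fin a, Sum.inl u ∈ D ∧
        G.Adj (Sum.inl u) (Sum.inr i) ∧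
        G.Adj (Sum.inl u) (Sum.inr (⟨(i : ℕ) + 1, h⟩ : Fin m)) := by
  intro i h
  obtain ⟨x, hxD, hxS⟩ : ∃ x ∈ D, x ∈ lowerClosedNbhd G i := by
    rcases hD.1.1 (Sum.inr i) with hi | ⟨x, hxD, hxi⟩
    exacts [⟨_, hi, i, le_rfl, .inl rfl⟩, ⟨x, hxD, i, le_rfl, .inr hxi⟩]
  have hsucc : Sum.inr ⟨(i : ℕ) + 1, h⟩ ∉ lowerClosedNbhd G i :=
    hG.inr_not_mem_lowerClosedNbhd (Fin.lt_def.2 (Nat.lt_succ_self _))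
  obtain ⟨v, hvD, hvS, v', hv'S, hvv'⟩ := hD.1.exists_adj_mem_not_mem hxD hxS hsucc
  obtain ⟨u, rfl, hu⟩ := hG.exists_adj_consecutive_of_adj_lowerClosedNbhd h hvS hv'S hvv'
  exact ⟨u, hvD, hu⟩

/-- In a convex bipartite graph with `|U| ≥ 2` and `|W| ≥ 2`, if `D` is a minimal
connected dominating set, then for any two consecutive vertices `w_i, w_{i+1}` of `W`
there is a vertex `u ∈ D ∩ U` adjacent to both. -/
theorem mcds_consecutive_common_neighbor {a m : ℕ} (ha : 2 ≤ a) (hm : 2 ≤ m)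
    (G : SimpleGraph (Fin a ⊕ Fin m)) (hG : ConvexBipartite G)
    (D : Set (Fin a ⊕ Fin m)) (hD : IsMinimalCDS G D) :
    ∀ i : Fin m, ∀ h : (i : ℕ) + 1 < m,
      ∃ u : Fin a, Sum.inl u ∈ D ∧
        G.Adj (Sum.inl u) (Sum.inr i) ∧
        G.Adj (Sum.inl u) (Sum.inr (⟨(i : ℕ) + 1, h⟩ : Fin m)) :=
  mcds_consecutive_common_neighbor_general G hG D hD
end

section
/- Let G = (U, W, E) be a convex bipartite graph with |U| ≥ 2 and |W| ≥ 2, with W ordered as w_1 < w_2 < ... < w_{|W|}, and let D be a minimal connected dominating set of G. If w_i and w_j are two vertices of W ∩ D with i < j that are consecutive among the vertices of W ∩ D (i.e. there is no k with i < k < j and w_k ∈ D), then there exists a vertex u ∈ D ∩ U that is adjacent to both w_i and w_j. -/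
/-!
A walk inside `D` from `w_i` to `w_j` must leave the closed neighbourhood of
`{w_x | x ≤ i}`. Since `G` is bipartite, the edge by which it leaves goes from some
`u ∈ D ∩ U` adjacent to a `w_x` with `x ≤ i` to some `w_y ∈ D` with `i < y`, and then
`j ≤ y` because `w_i, w_j` are consecutive in `D`. The neighbourhood of `u` is an
interval containing `w_x` and `w_y`, hence it contains `w_i` and `w_j`.
-/

open Sum

theorem SimpleGraph.Reachable.exists_adj_mem_notMem_of_induce {V : Type*} {G : SimpleGraph V}
    {D S : Set V} {s t : D} (h : (G.induce D).Reachable s t) (hs : s.1 ∈ S) (ht : t.1 ∉ S) :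
    ∃ v ∈ D, ∃ w ∈ D, v ∈ S ∧ w ∉ S ∧ G.Adj v w := by
  obtain ⟨p⟩ := h
  obtain ⟨d, -, hd, hd'⟩ := p.exists_boundary_dart (Subtype.val ⁻¹' S) hs ht
  exact ⟨_, d.fst.2, _, d.snd.2, hd, hd', d.adj⟩

theorem SimpleGraph.exists_inl_adj_across_of_reachable_induce {α β : Type*}
    {G : SimpleGraph (α ⊕ β)} (hαα : ∀ x y : α, ¬ G.Adj (inl x) (inl y))
    (hββ : ∀ x y : β, ¬ G.Adj (inr x) (inr y)) {D : Set (α ⊕ β)} (P : β → Prop)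
    {x y : β} (hx : inr x ∈ D) (hy : inr y ∈ D) (hPx : P x) (hPy : ¬ P y)
    (h : (G.induce D).Reachable ⟨inr x, hx⟩ ⟨inr y, hy⟩) :
    ∃ u : α, ∃ x' y' : β, inl u ∈ D ∧ inr y' ∈ D ∧ P x' ∧ ¬ P y' ∧
      G.Adj (inl u) (inr x') ∧ G.Adj (inl u) (inr y') := by
  set S : Set (α ⊕ β) := {v | ∃ z, P z ∧ (v = inr z ∨ G.Adj v (inr z))}
  have hyS : inr y ∉ S := by
    rintro ⟨z, hz, hyz | hadj⟩
    exacts [hPy (inr_injective hyz ▸ hz), hββ y z hadj]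
  obtain ⟨v, hv, w, hw, ⟨z, hz, hvz⟩, hwS, hvw⟩ :=
    h.exists_adj_mem_notMem_of_induce (S := S) ⟨x, hPx, .inl rfl⟩ hyS
  rcases hvz with rfl | hvz
  · exact absurd ⟨z, hz, .inr hvw.symm⟩ hwS
  rcases v with u | z'
  · rcases w with u' | y'
    · exact absurd hvw (hαα u u')
    · exact ⟨u, z, y', hv, hw, hz, fun hy' => hwS ⟨y', hy', .inl rfl⟩, hvz, hvw⟩
  · exact absurd hvz (hββ z' z)

theorem mcds_consecutive_in_D_common_neighbor_general {a m : ℕ}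
    (G : SimpleGraph (Fin a ⊕ Fin m)) (hG : ConvexBipartite G)
    (D : Set (Fin a ⊕ Fin m)) (hD : IsMinimalCDS G D)
    (i j : Fin m) (hi : Sum.inr i ∈ D) (hj : Sum.inr j ∈ D) (hij : i < j)
    (hcons : ∀ k : Fin m, i < k → k < j → Sum.inr k ∉ D) :
    ∃ u : Fin a, Sum.inl u ∈ D ∧
      G.Adj (Sum.inl u) (Sum.inr i) ∧ G.Adj (Sum.inl u) (Sum.inr j) := by
  obtain ⟨hUU, hWW, hconvex⟩ := hG
  obtain ⟨u, x, y, hu, hy, hxi, hyi, hux, huy⟩ :=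
    SimpleGraph.exists_inl_adj_across_of_reachable_induce hUU hWW (· ≤ i) hi hj le_rfl
      hij.not_ge (hD.1.2.preconnected _ _)
  have hjy : j ≤ y := not_lt.mp fun hyj => hcons y (not_le.mp hyi) hyj hy
  exact ⟨u, hu, hconvex u x i y hxi (hij.le.trans hjy) hux huy,
    hconvex u x j y (hxi.trans hij.le) hjy hux huy⟩

/-- In a convex bipartite graph with `|U| ≥ 2` and `|W| ≥ 2`, if `D` is a minimal
connected dominating set and `w_i < w_j` are consecutive vertices of `W ∩ D`
(no vertex of `W` strictly between them lies in `D`), then there is a vertex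
`u ∈ D ∩ U` adjacent to both `w_i` and `w_j`. -/
theorem mcds_consecutive_in_D_common_neighbor {a m : ℕ} (ha : 2 ≤ a) (hm : 2 ≤ m)
    (G : SimpleGraph (Fin a ⊕ Fin m)) (hG : ConvexBipartite G)
    (D : Set (Fin a ⊕ Fin m)) (hD : IsMinimalCDS G D)
    (i j : Fin m) (hi : Sum.inr i ∈ D) (hj : Sum.inr j ∈ D) (hij : i < j)
    (hcons : ∀ k : Fin m, i < k → k < j → Sum.inr k ∉ D) :
    ∃ u : Fin a, Sum.inl u ∈ D ∧
      G.Adj (Sum.inl u) (Sum.inr i) ∧ G.Adj (Sum.inl u) (Sum.inr j) :=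
  mcds_consecutive_in_D_common_neighbor_general G hG D hD i j hi hj hij hcons
end

section
/- Let G = (U, W, E) be a convex bipartite graph with |U| ≥ 2 and |W| ≥ 2, and let D be a minimal connected dominating set of G. Let i, j, k be three pairwise distinct vertices of U with i, j, k ∈ D such that N(i) ∩ N(j) ≠ ∅ and N(k) is a proper subset of N(i) ∪ N(j). Then N(i) ∩ N(j) ∩ D = ∅. -/
/-!
Suppose some `w ∈ N(i) ∩ N(j)` lies in `D`. Then `D \ {k}` is still a connected dominating set:
`w ≠ k` since `U` is independent, so `i - w - j` joins `i` and `j` inside `D \ {k}`, and every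
neighbour of `k` is adjacent to `i` or to `j`, so neither domination nor connectivity needed `k`.
This contradicts the minimality of `D`.
-/

namespace SimpleGraph

variable {V : Type*} {G : SimpleGraph V} {D : Set V} {k : V}

theorem exists_adj_of_preconnected_induce (hD : (G.induce D).Preconnected) (hkD : k ∈ D)
    {x : V} (hx : x ∈ D \ {k}) : ∃ z ∈ D \ {k}, G.Adj z k := by
  obtain ⟨p⟩ := hD ⟨k, hkD⟩ ⟨x, hx.1⟩
  have hne : (⟨k, hkD⟩ : D) ≠ ⟨x, hx.1⟩ := fun h ↦ hx.2 (congrArg Subtype.val h).symm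
  have hadj : (G.induce D).Adj ⟨k, hkD⟩ p.snd := p.adj_snd (p.not_nil_of_ne hne)
  exact ⟨p.snd, ⟨p.snd.2, fun h ↦ hadj.ne (Subtype.ext h.symm)⟩, hadj.symm⟩

theorem reachable_induce_diff_singleton_of_walk {b : V} (hb : b ∈ D \ {k})
    (hnbr : ∀ u (hu : u ∈ D \ {k}), G.Adj u k →
      (G.induce (D \ {k})).Reachable ⟨u, hu⟩ ⟨b, hb⟩) :
    ∀ {u : V} (p : G.Walk u b), (∀ w ∈ p.support, w ∈ D) → ∀ hu : u ∈ D \ {k},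
      (G.induce (D \ {k})).Reachable ⟨u, hu⟩ ⟨b, hb⟩
  | _, .nil, _, _ => .rfl
  | u, .cons (v := z) huz p, hp, hu => by
    by_cases hzk : z = k
    · exact hnbr u hu (hzk ▸ huz)
    · have hz : z ∈ D \ {k} := ⟨hp z (by simp), hzk⟩
      have hstep : (G.induce (D \ {k})).Adj ⟨u, hu⟩ ⟨z, hz⟩ := huz
      exact hstep.reachable.trans
        (reachable_induce_diff_singleton_of_walk hb hnbr p (fun w hw ↦ hp w (by simp [hw])) hz)

theorem Preconnected.induce_diff_singleton (hD : (G.induce D).Preconnected) {b : V}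
    (hb : b ∈ D \ {k})
    (hnbr : ∀ u (hu : u ∈ D \ {k}), G.Adj u k →
      (G.induce (D \ {k})).Reachable ⟨u, hu⟩ ⟨b, hb⟩) :
    (G.induce (D \ {k})).Preconnected := by
  have hreach (u : ↥(D \ {k})) : (G.induce (D \ {k})).Reachable u ⟨b, hb⟩ := by
    obtain ⟨p⟩ := hD ⟨u, u.2.1⟩ ⟨b, hb.1⟩
    refine reachable_induce_diff_singleton_of_walk hb hnbr (p.map (Embedding.induce D).toHom)
      (fun w hw ↦ ?_) u.2
    obtain ⟨w', -, rfl⟩ := List.mem_map.mp (Walk.support_map _ p ▸ hw)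
    exact w'.2
  exact fun u v ↦ (hreach u).trans (hreach v).symm

end SimpleGraph

open SimpleGraph

variable {V : Type*} {G : SimpleGraph V} {D : Set V} {k : V}

theorem IsDominatingSet.diff_singleton_s6 (hD : IsDominatingSet G D)
    (hk : ∃ z ∈ D \ {k}, G.Adj z k) (hN : ∀ v, G.Adj k v → ∃ u ∈ D \ {k}, G.Adj u v) :
    IsDominatingSet G (D \ {k}) := by
  intro v
  rcases hD v with hv | ⟨u, huD, huv⟩
  · by_cases hvk : v = k
    · exact .inr (hvk ▸ hk)
    · exact .inl ⟨hv, hvk⟩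
  · by_cases huk : u = k
    · exact .inr (hN v (huk ▸ huv))
    · exact .inr ⟨u, ⟨huD, huk⟩, huv⟩

theorem IsConnectedDominatingSet.diff_singleton_s6 (hD : IsConnectedDominatingSet G D)
    (hkD : k ∈ D) {x y : V} (hx : x ∈ D \ {k}) (hy : y ∈ D \ {k})
    (hxy : (G.induce (D \ {k})).Reachable ⟨x, hx⟩ ⟨y, hy⟩)
    (hN : G.neighborSet k ⊆ G.neighborSet x ∪ G.neighborSet y) :
    IsConnectedDominatingSet G (D \ {k}) := by
  have hNadj (v : V) (hkv : G.Adj k v) : G.Adj x v ∨ G.Adj y v := hN hkv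
  refine ⟨hD.1.diff_singleton_s6 (exists_adj_of_preconnected_induce hD.2.preconnected hkD hx)
    fun v hkv ↦ (hNadj v hkv).elim (fun h ↦ ⟨x, hx, h⟩) (fun h ↦ ⟨y, hy, h⟩), ?_⟩
  refine (connected_iff _).mpr
    ⟨hD.2.preconnected.induce_diff_singleton hx fun u hu huk ↦ ?_, ⟨⟨x, hx⟩⟩⟩
  have hadj {v : V} (hv : v ∈ D \ {k}) (huv : G.Adj u v) :
      (G.induce (D \ {k})).Reachable ⟨u, hu⟩ ⟨v, hv⟩ := (induce_adj.2 huv).reachable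
  rcases hNadj u huk.symm with hxu | hyu
  · exact hadj hx hxu.symm
  · exact (hadj hy hyu.symm).trans hxy.symm

theorem IsMinimalCDS.not_neighborSet_subset_union (hD : IsMinimalCDS G D) (hkD : k ∈ D)
    {x y : V} (hx : x ∈ D \ {k}) (hy : y ∈ D \ {k})
    (hxy : (G.induce (D \ {k})).Reachable ⟨x, hx⟩ ⟨y, hy⟩) :
    ¬ G.neighborSet k ⊆ G.neighborSet x ∪ G.neighborSet y := fun hN ↦
  hD.2 _ (Set.sdiff_singleton_ssubset.mpr hkD) (hD.1.diff_singleton_s6 hkD hx hy hxy hN)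

theorem mcds_forbidden_intersection_general {a m : ℕ}
    (G : SimpleGraph (Fin a ⊕ Fin m)) (hG : ConvexBipartite G)
    (D : Set (Fin a ⊕ Fin m)) (hD : IsMinimalCDS G D)
    (i j k : Fin a) (hik : i ≠ k) (hjk : j ≠ k)
    (hiD : Sum.inl i ∈ D) (hjD : Sum.inl j ∈ D) (hkD : Sum.inl k ∈ D)
    (hk : G.neighborSet (Sum.inl k) ⊂
      G.neighborSet (Sum.inl i) ∪ G.neighborSet (Sum.inl j)) :
    G.neighborSet (Sum.inl i) ∩ G.neighborSet (Sum.inl j) ∩ D = ∅ := by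
  refine Set.eq_empty_of_forall_notMem fun w ⟨⟨hiw, hjw⟩, hwD⟩ ↦ ?_
  replace hiw : G.Adj (Sum.inl i) w := hiw
  replace hjw : G.Adj (Sum.inl j) w := hjw
  have hwk : w ≠ Sum.inl k := by
    rintro rfl
    exact hG.1 i k hiw
  have hi : Sum.inl i ∈ D \ {Sum.inl k} := ⟨hiD, by simpa using hik⟩
  have hj : Sum.inl j ∈ D \ {Sum.inl k} := ⟨hjD, by simpa using hjk⟩
  have hw : w ∈ D \ {Sum.inl k} := ⟨hwD, hwk⟩
  have hij : (G.induce (D \ {Sum.inl k})).Reachable ⟨_, hi⟩ ⟨_, hj⟩ :=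
    (induce_adj.2 hiw : (G.induce _).Adj ⟨_, hi⟩ ⟨w, hw⟩).reachable.trans
      (induce_adj.2 hjw.symm : (G.induce _).Adj ⟨w, hw⟩ ⟨_, hj⟩).reachable
  exact hD.not_neighborSet_subset_union hkD hi hj hij hk.subset

/-- In a convex bipartite graph with `|U| ≥ 2` and `|W| ≥ 2`, if `D` is a minimal
connected dominating set and `i, j, k` are pairwise distinct vertices of `U` lying in `D`
with `N(i) ∩ N(j) ≠ ∅` and `N(k)` a proper subset of `N(i) ∪ N(j)`,
then `N(i) ∩ N(j) ∩ D = ∅`. -/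
theorem mcds_forbidden_intersection {a m : ℕ} (ha : 2 ≤ a) (hm : 2 ≤ m)
    (G : SimpleGraph (Fin a ⊕ Fin m)) (hG : ConvexBipartite G)
    (D : Set (Fin a ⊕ Fin m)) (hD : IsMinimalCDS G D)
    (i j k : Fin a) (hij : i ≠ j) (hik : i ≠ k) (hjk : j ≠ k)
    (hiD : Sum.inl i ∈ D) (hjD : Sum.inl j ∈ D) (hkD : Sum.inl k ∈ D)
    (hinter : (G.neighborSet (Sum.inl i) ∩ G.neighborSet (Sum.inl j)).Nonempty)
    (hk : G.neighborSet (Sum.inl k) ⊂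
      G.neighborSet (Sum.inl i) ∪ G.neighborSet (Sum.inl j)) :
    G.neighborSet (Sum.inl i) ∩ G.neighborSet (Sum.inl j) ∩ D = ∅ :=
  mcds_forbidden_intersection_general G hG D hD i j k hik hjk hiD hjD hkD hk
end

section
/- Let G = (U, W, E) be a convex bipartite graph with |U| ≥ 2 and |W| ≥ 2, and let D be a minimal connected dominating set of G. Let i, j ∈ D ∩ U with N(i) ∩ N(j) ≠ ∅. Then there is at most one vertex k ∈ D ∩ U with k ∉ {i, j} such that N(k) is a proper subset of N(i) ∪ N(j). -/
namespace SimpleGraph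

variable {V : Type*} {G : SimpleGraph V}

lemma Walk.eq_one_of_adj_getVert_of_length_eq_dist {u v : V} (p : G.Walk u v)
    (hp : p.length = G.dist u v) {s : ℕ} (hs : s + 1 < p.length)
    (hadj : G.Adj u (p.getVert s) ∨ G.Adj (p.getVert s) v) : s = 1 := by
  rcases hadj with hu | hv
  · have hs0 : s ≠ 0 := by
      rintro rfl
      exact hu.ne p.getVert_zero.symm
    have hshort := dist_le ((p.drop s).cons hu)
    simp only [Walk.length_cons, Walk.drop_length] at hshort
    omega
  · have hshort := dist_le ((p.take s).concat hv)
    simp only [Walk.length_concat, Walk.take_length] at hshort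
    omega

variable {D : Set V} {i j k : V}

/-- A walk of `G[D]` from a vertex that `i` does not reach in `G[D \ {k}]` to `i` can only leave
the unreached vertices by stepping onto `k`, but the neighbours of `k` are adjacent to `i` or `j`.
-/
lemma connected_induce_diff_singleton (hD : (G.induce D).Connected) (hi : i ∈ D \ {k})
    (hj : j ∈ D \ {k}) (hN : G.neighborSet k ⊆ G.neighborSet i ∪ G.neighborSet j)
    (hij : (G.induce (D \ {k})).Reachable ⟨i, hi⟩ ⟨j, hj⟩) :
    (G.induce (D \ {k})).Connected := by
  set R : V → Prop :=
    fun x => ∃ hx : x ∈ D \ {k}, (G.induce (D \ {k})).Reachable ⟨i, hi⟩ ⟨x, hx⟩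
  have hR_of_adj : ∀ {x y}, x ∈ D \ {k} → G.Adj x y → R y → R x := by
    rintro x y hx hxy ⟨hy, hr⟩
    exact ⟨hx, hr.trans (Adj.reachable (G := G.induce (D \ {k})) (u := ⟨y, hy⟩) hxy.symm)⟩
  have hR_of_adj_k : ∀ {x}, x ∈ D \ {k} → G.Adj k x → R x := by
    intro x hx hkx
    rcases hN hkx with hix | hjx
    · exact hR_of_adj hx hix.symm ⟨hi, .refl _⟩
    · exact hR_of_adj hx hjx.symm ⟨hj, hij⟩
  rw [connected_iff_exists_forall_reachable]
  refine ⟨⟨i, hi⟩, fun ⟨x, hx⟩ => by_contra fun hxi => ?_⟩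
  obtain ⟨p⟩ := hD.preconnected ⟨x, hx.1⟩ ⟨i, hi.1⟩
  obtain ⟨d, -, ⟨hd₁k, hd₁R⟩, hd₂⟩ :=
    p.exists_boundary_dart {y | y.1 ≠ k ∧ ¬ R y.1} ⟨hx.2, fun ⟨_, h⟩ => hxi h⟩
      fun h => h.2 ⟨hi, .refl _⟩
  have hd₁ : d.fst.1 ∈ D \ {k} := ⟨d.fst.2, hd₁k⟩
  by_cases hd₂k : d.snd.1 = k
  · exact hd₁R (hR_of_adj_k hd₁ (hd₂k ▸ d.adj.symm))
  · exact hd₁R (hR_of_adj hd₁ d.adj (not_and_not_right.1 hd₂ hd₂k))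

end SimpleGraph

open SimpleGraph

section

variable {V : Type*} {G : SimpleGraph V} {D : Set V} {i j k : V}

lemma IsConnectedDominatingSet.isDominatingSet_diff_singleton
    (hD : IsConnectedDominatingSet G D) (hk : k ∈ D) (hi : i ∈ D \ {k}) (hj : j ∈ D \ {k})
    (hN : G.neighborSet k ⊆ G.neighborSet i ∪ G.neighborSet j) :
    IsDominatingSet G (D \ {k}) := by
  intro v
  by_cases hvk : v = k
  · subst hvk
    obtain ⟨p⟩ := hD.2.preconnected ⟨v, hk⟩ ⟨i, hi.1⟩
    have hp : ¬ p.Nil := fun h => hi.2 (congrArg Subtype.val h.eq).symm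
    have hadj : G.Adj v p.snd := p.adj_snd hp
    exact Or.inr ⟨p.snd, ⟨p.snd.2, hadj.ne.symm⟩, hadj.symm⟩
  · rcases hD.1 v with hv | ⟨u, hu, huv⟩
    · exact Or.inl ⟨hv, hvk⟩
    · by_cases huk : u = k
      · subst huk
        rcases hN huv with hiv | hjv
        · exact Or.inr ⟨i, hi, hiv⟩
        · exact Or.inr ⟨j, hj, hjv⟩
      · exact Or.inr ⟨u, ⟨hu, huk⟩, huv⟩

lemma IsMinimalCDS.not_reachable_induce_diff_singleton (hD : IsMinimalCDS G D) (hk : k ∈ D)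
    (hi : i ∈ D \ {k}) (hj : j ∈ D \ {k})
    (hN : G.neighborSet k ⊆ G.neighborSet i ∪ G.neighborSet j) :
    ¬ (G.induce (D \ {k})).Reachable ⟨i, hi⟩ ⟨j, hj⟩ := fun hij =>
  hD.2 (D \ {k}) (Set.sdiff_singleton_ssubset.2 hk)
    ⟨hD.1.isDominatingSet_diff_singleton hk hi hj hN,
      connected_induce_diff_singleton hD.1.2 hi hj hN hij⟩

lemma IsMinimalCDS.mem_support_of_neighborSet_subset (hD : IsMinimalCDS G D) (hk : k ∈ D)
    (hi : i ∈ D) (hj : j ∈ D) (hki : k ≠ i) (hkj : k ≠ j)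
    (hN : G.neighborSet k ⊆ G.neighborSet i ∪ G.neighborSet j)
    (p : (G.induce D).Walk ⟨i, hi⟩ ⟨j, hj⟩) : ⟨k, hk⟩ ∈ p.support := by
  by_contra hkp
  have hq : ∀ z ∈ (p.map (Embedding.induce D).toHom).support, z ∈ D \ {k} := by
    intro z hz
    rw [Walk.support_map, List.mem_map] at hz
    obtain ⟨y, hy, rfl⟩ := hz
    exact ⟨y.2, fun h => hkp (by rwa [show y = ⟨k, hk⟩ from Subtype.ext h] at hy)⟩
  exact hD.not_reachable_induce_diff_singleton hk ⟨hi, hki.symm⟩ ⟨hj, hkj.symm⟩ hN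
    ⟨(p.map (Embedding.induce D).toHom).induce _ hq⟩

lemma IsMinimalCDS.getVert_two_eq_of_neighborSet_subset (hD : IsMinimalCDS G D) (hk : k ∈ D)
    (hi : i ∈ D) (hj : j ∈ D) (hki : k ≠ i) (hkj : k ≠ j)
    (hN : G.neighborSet k ⊆ G.neighborSet i ∪ G.neighborSet j)
    (p : (G.induce D).Walk ⟨i, hi⟩ ⟨j, hj⟩)
    (hp : p.length = (G.induce D).dist ⟨i, hi⟩ ⟨j, hj⟩) :
    p.getVert 2 = ⟨k, hk⟩ := by
  obtain ⟨t, hkt, htp⟩ := Walk.mem_support_iff_exists_getVert.1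
    (hD.mem_support_of_neighborSet_subset hk hi hj hki hkj hN p)
  obtain ⟨s, rfl⟩ : ∃ s, t = s + 1 := Nat.exists_eq_succ_of_ne_zero fun ht => by
    rw [ht, Walk.getVert_zero] at hkt
    exact hki (congrArg Subtype.val hkt).symm
  have hsp : s + 1 < p.length := htp.lt_of_ne fun ht => by
    rw [ht, Walk.getVert_length] at hkt
    exact hkj (congrArg Subtype.val hkt).symm
  have hadj : G.Adj k (p.getVert s) := by
    simpa [hkt] using (p.adj_getVert_succ (Nat.lt_of_succ_lt hsp)).symm
  obtain rfl : s = 1 := p.eq_one_of_adj_getVert_of_length_eq_dist hp hsp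
    ((hN hadj).imp id Adj.symm)
  exact hkt

end

theorem mcds_at_most_one_inside_general {a m : ℕ}
    (G : SimpleGraph (Fin a ⊕ Fin m))
    (D : Set (Fin a ⊕ Fin m)) (hD : IsMinimalCDS G D)
    (i j : Fin a) (hiD : Sum.inl i ∈ D) (hjD : Sum.inl j ∈ D) :
    ∀ k₁ k₂ : Fin a,
      Sum.inl k₁ ∈ D → k₁ ≠ i → k₁ ≠ j →
      G.neighborSet (Sum.inl k₁) ⊂
        G.neighborSet (Sum.inl i) ∪ G.neighborSet (Sum.inl j) →
      Sum.inl k₂ ∈ D → k₂ ≠ i → k₂ ≠ j →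
      G.neighborSet (Sum.inl k₂) ⊂
        G.neighborSet (Sum.inl i) ∪ G.neighborSet (Sum.inl j) →
      k₁ = k₂ := by
  intro k₁ k₂ hk₁ hk₁i hk₁j hN₁ hk₂ hk₂i hk₂j hN₂
  obtain ⟨p, hp⟩ := hD.1.2.exists_walk_length_eq_dist ⟨_, hiD⟩ ⟨_, hjD⟩
  have h₁ := hD.getVert_two_eq_of_neighborSet_subset hk₁ hiD hjD (Sum.inl_injective.ne hk₁i)
    (Sum.inl_injective.ne hk₁j) hN₁.subset p hp
  have h₂ := hD.getVert_two_eq_of_neighborSet_subset hk₂ hiD hjD (Sum.inl_injective.ne hk₂i)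
    (Sum.inl_injective.ne hk₂j) hN₂.subset p hp
  exact Sum.inl_injective (congrArg Subtype.val (h₁.symm.trans h₂))

/-- In a convex bipartite graph with `|U| ≥ 2` and `|W| ≥ 2`, if `D` is a minimal
connected dominating set and `i, j ∈ D ∩ U` satisfy `N(i) ∩ N(j) ≠ ∅`, then there is
at most one vertex `k ∈ D ∩ U`, `k ∉ {i, j}`, with `N(k)` a proper subset of
`N(i) ∪ N(j)`. -/
theorem mcds_at_most_one_inside {a m : ℕ} (ha : 2 ≤ a) (hm : 2 ≤ m)
    (G : SimpleGraph (Fin a ⊕ Fin m)) (hG : ConvexBipartite G)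
    (D : Set (Fin a ⊕ Fin m)) (hD : IsMinimalCDS G D)
    (i j : Fin a) (hiD : Sum.inl i ∈ D) (hjD : Sum.inl j ∈ D)
    (hinter : (G.neighborSet (Sum.inl i) ∩ G.neighborSet (Sum.inl j)).Nonempty) :
    ∀ k₁ k₂ : Fin a,
      Sum.inl k₁ ∈ D → k₁ ≠ i → k₁ ≠ j →
      G.neighborSet (Sum.inl k₁) ⊂
        G.neighborSet (Sum.inl i) ∪ G.neighborSet (Sum.inl j) →
      Sum.inl k₂ ∈ D → k₂ ≠ i → k₂ ≠ j →
      G.neighborSet (Sum.inl k₂) ⊂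
        G.neighborSet (Sum.inl i) ∪ G.neighborSet (Sum.inl j) →
      k₁ = k₂ :=
  mcds_at_most_one_inside_general G D hD i j hiD hjD
end

section
/- There exists a constant C > 0 such that for every positive integer n, every convex bipartite graph on n vertices has at most C · 1.7254^n minimal connected dominating sets. -/
/-!
Write a vertex set as `S ⊔ T` with `S ⊆ U` and `T ⊆ W`. When both parts are nonempty, `S ⊔ T`
is a connected dominating set iff `S` dominates `W`, `T` dominates `U`, and any two consecutive
vertices of `T` have a common neighbour in `S`.

Fix one part of a minimal connected dominating set and list the other part in increasing order
(`T` by position in `W`, `S` by the left end of the neighbourhood). Minimality confines each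
listed vertex to a window determined by the vertices before it, and the next window lies beyond
the current one.
Such lists drawn from `ν` vertices number at most `f ν` whenever `1 + W f (ν - W) ≤ f ν`, and
`f ν = 14 · 1.48 ^ ν` qualifies because `1.48 > 3 ^ (1/3)`. So a part `S` has at most
`14 · 1.48 ^ m` partners `T`, a part `T` at most `14 · 1.48 ^ a` partners `S`, and the number of
pairs is at most `min (2 ^ a · 14 · 1.48 ^ m) (2 ^ m · 14 · 1.48 ^ a) ≤ 14 · √2.96 ^ n`, where
`√2.96 < 1.7254`. At most two minimal connected dominating sets have an empty part.
-/

open Finset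

section WindowPath

variable {β : Type*}

/-- The history `pfx` lists the entries chosen so far, most recent first. -/
inductive IsWindowPath (window : List β → Finset β) : List β → List β → Prop
  | nil (pfx : List β) : IsWindowPath window pfx []
  | cons {pfx : List β} {x : β} {l : List β} :
      x ∈ window pfx → IsWindowPath window (x :: pfx) l → IsWindowPath window pfx (x :: l)

theorem isWindowPath_of_forall_eq_append (window : List β → Finset β) :
    ∀ (L pfx : List β), (∀ l₁ x l₂, L = l₁ ++ x :: l₂ → x ∈ window (l₁.reverse ++ pfx)) →
      IsWindowPath window pfx L
  | [], pfx, _ => .nil pfx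
  | x :: L, pfx, h => by
    refine .cons (by simpa using h [] x L rfl) (isWindowPath_of_forall_eq_append window L _ ?_)
    intro l₁ y l₂ hL
    simpa using h (x :: l₁) y l₂ (by simp [hL])

/-- `P` is the history at which `x` is chosen when `C` is listed in increasing `κ`-order. -/
def IsPredList {γ : Type*} [LinearOrder γ] (κ : β → γ) (C : Finset β) (x : β) (P : List β) :
    Prop :=
  (∀ s, s ∈ P ↔ s ∈ C ∧ κ s < κ x) ∧ P.Pairwise (fun s s' => κ s' < κ s)

namespace IsPredList

variable {γ : Type*} [LinearOrder γ] {κ : β → γ} {C : Finset β} {x t s : β} {P : List β}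

theorem head_mem (h : IsPredList κ C x (t :: P)) : t ∈ C ∧ κ t < κ x :=
  (h.1 t).1 List.mem_cons_self

theorem le_head (h : IsPredList κ C x (t :: P)) (hs : s ∈ t :: P) : κ s ≤ κ t := by
  rcases List.mem_cons.1 hs with rfl | hs
  · exact le_rfl
  · exact ((List.pairwise_cons.1 h.2).1 s hs).le

theorem tail (h : IsPredList κ C x (t :: P)) : IsPredList κ C t P := by
  obtain ⟨hbelow, hP⟩ := List.pairwise_cons.1 h.2
  refine ⟨fun s => ⟨fun hs => ⟨((h.1 s).1 (List.mem_cons_of_mem t hs)).1, hbelow s hs⟩,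
    fun ⟨hs, hst⟩ => ?_⟩, hP⟩
  have := (h.1 s).2 ⟨hs, hst.trans h.head_mem.2⟩
  exact (List.mem_cons.1 this).resolve_left (by rintro rfl; exact lt_irrefl _ hst)

theorem le_of_notMem (h : IsPredList κ C x P) (hs : s ∈ C) (hsP : s ∉ P) : κ x ≤ κ s :=
  not_lt.1 fun hlt => hsP ((h.1 s).2 ⟨hs, hlt⟩)

theorem le_of_head_lt (h : IsPredList κ C x (t :: P)) (hs : s ∈ C) (hts : κ t < κ s) :
    κ x ≤ κ s :=
  h.le_of_notMem hs fun hsP => (h.le_head hsP).not_gt hts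

theorem forall_le (h : IsPredList κ C x []) : ∀ s ∈ C, κ x ≤ κ s :=
  fun _ hs => h.le_of_notMem hs List.not_mem_nil

end IsPredList

variable [DecidableEq β]

/-- A path either stops at once, or starts in the window and goes on from a region that has lost
the whole window. -/
theorem card_le_of_isWindowPath (window region : List β → Finset β)
    (hwindow : ∀ pfx, window pfx ⊆ region pfx)
    (hregion : ∀ pfx, ∀ x ∈ window pfx, region (x :: pfx) ⊆ region pfx \ window pfx)
    (f : ℕ → ℝ) (hf_mono : Monotone f) (hf : ∀ W ν, W ≤ ν → 1 + W * f (ν - W) ≤ f ν) :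
    ∀ (pfx : List β) (𝓛 : Finset (List β)), (∀ l ∈ 𝓛, IsWindowPath window pfx l) →
      (#𝓛 : ℝ) ≤ f #(region pfx) := by
  intro pfx
  induction hν : #(region pfx) using Nat.strong_induction_on generalizing pfx with
  | _ ν ih =>
  intro 𝓛 h𝓛
  set tails : β → Finset (List β) := fun x => (𝓛.image List.tail).filter (x :: · ∈ 𝓛)
  have hcover : 𝓛 ⊆ insert [] ((window pfx).biUnion fun x => (tails x).image (x :: ·)) := by
    intro l hl
    obtain _ | ⟨hx, -⟩ := h𝓛 l hl
    · exact mem_insert_self _ _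
    · refine mem_insert_of_mem (mem_biUnion.2 ⟨_, hx, mem_image.2 ⟨_, ?_, rfl⟩⟩)
      exact mem_filter.2 ⟨mem_image.2 ⟨_, hl, rfl⟩, hl⟩
  have hcard : #𝓛 ≤ 1 + ∑ x ∈ window pfx, #(tails x) :=
    calc #𝓛 ≤ #((window pfx).biUnion fun x => (tails x).image (x :: ·)) + 1 :=
          (card_le_card hcover).trans (card_insert_le _ _)
      _ ≤ ∑ x ∈ window pfx, #((tails x).image (x :: ·)) + 1 :=
          Nat.add_le_add_right card_biUnion_le 1
      _ ≤ 1 + ∑ x ∈ window pfx, #(tails x) := by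
          rw [add_comm]
          exact Nat.add_le_add_left (sum_le_sum fun x _ => card_image_le) 1
  have htails : ∀ x ∈ window pfx, (#(tails x) : ℝ) ≤ f (ν - #(window pfx)) := by
    intro x hx
    have hsub : #(region (x :: pfx)) ≤ ν - #(window pfx) := by
      rw [← hν, ← card_sdiff_of_subset (hwindow pfx)]
      exact card_le_card (hregion pfx x hx)
    have hlt : #(region (x :: pfx)) < ν := by
      have := card_pos.2 ⟨x, hx⟩
      have := card_le_card (hwindow pfx)
      omega
    refine (ih _ hlt (x :: pfx) rfl (tails x) fun l hl => ?_).trans (hf_mono hsub)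
    cases h𝓛 _ (mem_filter.1 hl).2 with
    | cons _ hpath => exact hpath
  calc (#𝓛 : ℝ)
      ≤ 1 + ∑ x ∈ window pfx, (#(tails x) : ℝ) := by exact_mod_cast hcard
    _ ≤ 1 + #(window pfx) * f (ν - #(window pfx)) := by
        simpa using sum_le_card_nsmul _ _ _ htails
    _ ≤ f ν := hf _ _ (hν ▸ card_le_card (hwindow pfx))

theorem exists_toFinset_eq_pairwise_lt {γ : Type*} [LinearOrder γ] {κ : β → γ}
    (hκ : Function.Injective κ) (C : Finset β) :
    ∃ L : List β, L.toFinset = C ∧ L.Pairwise (fun s s' => κ s < κ s') := by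
  induction C using Finset.induction_on_max_value κ with
  | empty => exact ⟨[], rfl, .nil⟩
  | insert x C hx hmax ih =>
    obtain ⟨L, rfl, hL⟩ := ih
    refine ⟨L ++ [x], ?_, List.pairwise_append.2 ⟨hL, List.pairwise_singleton _ _, ?_⟩⟩
    · ext y
      simp
    intro s hs y hy
    obtain rfl := List.mem_singleton.1 hy
    exact (hmax s (by simpa using hs)).lt_of_ne fun h => hx (hκ h ▸ by simpa using hs)

theorem exists_isWindowPath {γ : Type*} [LinearOrder γ] {κ : β → γ} (hκ : Function.Injective κ)
    (window : List β → Finset β) (C : Finset β)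
    (h : ∀ x ∈ C, ∀ P, IsPredList κ C x P → x ∈ window P) :
    ∃ L, IsWindowPath window [] L ∧ L.toFinset = C := by
  obtain ⟨L, rfl, hL⟩ := exists_toFinset_eq_pairwise_lt hκ C
  refine ⟨L, isWindowPath_of_forall_eq_append window L [] fun l₁ x l₂ hsplit => ?_, rfl⟩
  subst hsplit
  rw [List.append_nil]
  obtain ⟨hl₁, hxl₂, hl₁x⟩ := List.pairwise_append.1 hL
  refine h x (by simp) _ ⟨fun s => ?_, List.pairwise_reverse.2 hl₁⟩
  simp only [List.mem_reverse, List.mem_toFinset, List.mem_append, List.mem_cons]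
  constructor
  · intro hs
    exact ⟨Or.inl hs, hl₁x s hs x List.mem_cons_self⟩
  · rintro ⟨hs | rfl | hs, hlt⟩
    · exact hs
    · exact absurd hlt (lt_irrefl _)
    · exact absurd ((List.pairwise_cons.1 hxl₂).1 s hs) hlt.not_gt

def intervalWindow [Fintype β] (key : β → ℕ) (lo hi : List β → ℕ) (pfx : List β) : Finset β :=
  univ.filter fun v => lo pfx ≤ key v ∧ key v ≤ hi pfx

theorem card_le_of_forall_isPredList [Fintype β] {γ : Type*} [LinearOrder γ]
    {κ : β → γ} (hκ : Function.Injective κ) (key : β → ℕ) (lo hi : List β → ℕ)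
    (hstep : ∀ pfx x, lo pfx ≤ key x → key x ≤ hi pfx → hi pfx < lo (x :: pfx))
    (f : ℕ → ℝ) (hf_mono : Monotone f) (hf : ∀ W ν, W ≤ ν → 1 + W * f (ν - W) ≤ f ν)
    (𝒞 : Finset (Finset β))
    (h𝒞 : ∀ C ∈ 𝒞, ∀ x ∈ C, ∀ P, IsPredList κ C x P → lo P ≤ key x ∧ key x ≤ hi P) :
    (#𝒞 : ℝ) ≤ f (Fintype.card β) := by
  have hpath : ∀ C ∈ 𝒞, ∃ L, IsWindowPath (intervalWindow key lo hi) [] L ∧ L.toFinset = C :=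
    fun C hC => exists_isWindowPath hκ _ C fun x hx P hP => by
      simpa [intervalWindow] using h𝒞 C hC x hx P hP
  choose! path hpath_isWindowPath hpath_toFinset using hpath
  have hinj : Set.InjOn path 𝒞 := fun C hC C' hC' h => by
    rw [← hpath_toFinset C hC, ← hpath_toFinset C' hC', h]
  rw [← card_image_of_injOn hinj]
  refine (card_le_of_isWindowPath (intervalWindow key lo hi)
    (fun pfx => univ.filter fun v => lo pfx ≤ key v) ?_ ?_ f hf_mono hf [] _ ?_).trans
    (hf_mono (card_le_univ _))
  · intro pfx v hv
    simp only [intervalWindow, mem_filter] at hv ⊢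
    exact ⟨hv.1, hv.2.1⟩
  · intro pfx x hx v hv
    simp only [intervalWindow, mem_filter, mem_sdiff, mem_univ, true_and] at hx hv ⊢
    have := hstep pfx x hx.1 hx.2
    omega
  · simp only [mem_image]
    rintro _ ⟨C, hC, rfl⟩
    exact hpath_isWindowPath C hC

end WindowPath

section SuccIn

variable {α : Type*} [LinearOrder α] {T : Finset α}

def IsSuccIn (T : Finset α) (t x : α) : Prop :=
  t ∈ T ∧ x ∈ T ∧ t < x ∧ ∀ s ∈ T, t < s → x ≤ s

theorem IsSuccIn.left_unique {t t' x : α} (h : IsSuccIn T t x) (h' : IsSuccIn T t' x) :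
    t = t' := by
  by_contra hne
  rcases lt_or_gt_of_ne hne with hlt | hlt
  · exact (h.2.2.2 t' h'.1 hlt).not_gt h'.2.2.1
  · exact (h'.2.2.2 t h.1 hlt).not_gt h.2.2.1

theorem IsSuccIn.right_unique {t x x' : α} (h : IsSuccIn T t x) (h' : IsSuccIn T t x') :
    x = x' :=
  le_antisymm (h.2.2.2 x' h'.2.1 h'.2.2.1) (h'.2.2.2 x h.2.1 h.2.2.1)

theorem exists_isSuccIn {s x : α} (hs : s ∈ T) (hx : x ∈ T) (hsx : s < x) :
    ∃ t, IsSuccIn T t x := by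
  have hne : (T.filter (· < x)).Nonempty := ⟨s, mem_filter.2 ⟨hs, hsx⟩⟩
  obtain ⟨ht, htx⟩ := mem_filter.1 ((T.filter (· < x)).max'_mem hne)
  refine ⟨_, ht, hx, htx, fun r hr hlt => not_lt.1 fun hrx => hlt.not_ge ?_⟩
  exact (T.filter (· < x)).le_max' r (mem_filter.2 ⟨hr, hrx⟩)

theorem isSuccIn_or_of_isSuccIn_erase {t a b : α} (h : IsSuccIn (T.erase t) a b) :
    IsSuccIn T a b ∨ (IsSuccIn T a t ∧ IsSuccIn T t b) := by
  obtain ⟨ha, hb, hab, hnext⟩ := h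
  have ha' := mem_of_mem_erase ha
  have hb' := mem_of_mem_erase hb
  by_cases hbetween : t ∈ T ∧ a < t ∧ t < b
  · obtain ⟨ht, hat, htb⟩ := hbetween
    refine .inr ⟨⟨ha', ht, hat, fun s hs hlt => ?_⟩, ⟨ht, hb', htb, fun s hs hlt => ?_⟩⟩
    · by_contra! hst
      exact (hnext s (mem_erase.2 ⟨hst.ne, hs⟩) hlt).not_gt (hst.trans htb)
    · by_contra! hsb
      exact (hnext s (mem_erase.2 ⟨hlt.ne', hs⟩) (hat.trans hlt)).not_gt hsb
  · refine .inl ⟨ha', hb', hab, fun s hs hlt => ?_⟩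
    by_cases hst : s = t
    · subst hst
      exact not_lt.1 fun h => hbetween ⟨hs, hlt, h⟩
    · exact hnext s (mem_erase.2 ⟨hst, hs⟩) hlt

theorem IsPredList.isSuccIn {x t : α} {P : List α} (h : IsPredList id T x (t :: P))
    (hx : x ∈ T) : IsSuccIn T t x :=
  ⟨h.head_mem.1, hx, h.head_mem.2, fun _ hs hts => h.le_of_head_lt hs hts⟩

end SuccIn

theorem card_filter_prod_le_left {α β : Type*} [Fintype α] [Fintype β] (Q : α → β → Prop)
    [∀ x, DecidablePred (Q x)] {c : ℝ} (h : ∀ x, (#(univ.filter (Q x)) : ℝ) ≤ c) :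
    (#(univ.filter fun p : α × β => Q p.1 p.2) : ℝ) ≤ Fintype.card α * c := by
  rw [card_filter, Fintype.sum_prod_type]
  simp only [← card_filter]
  push_cast
  simpa using sum_le_card_nsmul univ _ c fun x _ => h x

theorem card_filter_prod_le_right {α β : Type*} [Fintype α] [Fintype β] (Q : α → β → Prop)
    [∀ x, DecidablePred (Q x)] {c : ℝ} (h : ∀ y, (#(univ.filter (Q · y)) : ℝ) ≤ c) :
    (#(univ.filter fun p : α × β => Q p.1 p.2) : ℝ) ≤ Fintype.card β * c := by
  rw [card_filter, Fintype.sum_prod_type_right]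
  simp only [← card_filter]
  push_cast
  simpa using sum_le_card_nsmul univ _ c fun y _ => h y

theorem one_add_fourteen_mul_le (W : ℕ) : 1 + 14 * (W : ℝ) ≤ 14 * 1.48 ^ W := by
  induction W with
  | zero => norm_num
  | succ W ih =>
    rcases Nat.lt_or_ge W 3 with hW | hW
    · interval_cases W <;> norm_num
    · have : (3 : ℝ) ≤ W := by exact_mod_cast hW
      push_cast
      rw [pow_succ]
      nlinarith

theorem one_add_mul_le_fourteen_mul_pow {W ν : ℕ} (h : W ≤ ν) :
    1 + W * (14 * 1.48 ^ (ν - W)) ≤ (14 * 1.48 ^ ν : ℝ) := by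
  have hsplit : (1.48 : ℝ) ^ ν = 1.48 ^ (ν - W) * 1.48 ^ W := by
    rw [← pow_add, Nat.sub_add_cancel h]
  have := one_add_fourteen_mul_le W
  have : (1 : ℝ) ≤ 1.48 ^ (ν - W) := one_le_pow₀ (by norm_num)
  rw [hsplit]
  nlinarith

theorem fourteen_mul_pow_monotone : Monotone fun ν : ℕ => (14 * 1.48 ^ ν : ℝ) :=
  fun _ _ h => mul_le_mul_of_nonneg_left (pow_le_pow_right₀ (by norm_num) h) (by norm_num)

theorem le_fourteen_mul_pow_of_le_of_le {X : ℝ} {a m : ℕ} (hX : 0 ≤ X)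
    (ha : X ≤ 2 ^ a * (14 * 1.48 ^ m)) (hm : X ≤ 2 ^ m * (14 * 1.48 ^ a)) :
    X ≤ 14 * 1.7254 ^ (a + m) := by
  have hprod : X * X ≤ 196 * 2.96 ^ (a + m) :=
    calc X * X ≤ (2 ^ a * (14 * 1.48 ^ m)) * (2 ^ m * (14 * 1.48 ^ a)) :=
          mul_le_mul ha hm hX (hX.trans ha)
      _ = 196 * ((2 : ℝ) * 1.48) ^ (a + m) := by rw [mul_pow, pow_add, pow_add]; ring
      _ = 196 * 2.96 ^ (a + m) := by norm_num
  have hsq : 196 * (2.96 : ℝ) ^ (a + m) ≤ (14 * 1.7254 ^ (a + m)) * (14 * 1.7254 ^ (a + m)) := by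
    rw [show (14 * (1.7254 : ℝ) ^ (a + m)) * (14 * 1.7254 ^ (a + m)) =
      196 * (1.7254 * 1.7254) ^ (a + m) by rw [mul_pow]; ring]
    gcongr
    norm_num
  exact (mul_self_le_mul_self_iff hX (by positivity)).2 (hprod.trans hsq)

def minD (s : Finset ℕ) (d : ℕ) : ℕ := (insert d s).min' (insert_nonempty d s)

theorem minD_le {s : Finset ℕ} {d x : ℕ} (hx : x ∈ s) : minD s d ≤ x :=
  min'_le _ _ (mem_insert_of_mem hx)

theorem minD_le_default (s : Finset ℕ) (d : ℕ) : minD s d ≤ d :=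
  min'_le _ _ (mem_insert_self d s)

theorem le_minD {s : Finset ℕ} {d b : ℕ} (hd : b ≤ d) (h : ∀ x ∈ s, b ≤ x) : b ≤ minD s d :=
  le_min' _ _ _ fun x hx => (mem_insert.1 hx).elim (· ▸ hd) (h x)

theorem minD_mem {s : Finset ℕ} {d : ℕ} (hs : s.Nonempty) (h : ∀ x ∈ s, x < d) :
    minD s d ∈ s := by
  obtain ⟨x, hx⟩ := hs
  rcases mem_insert.1 (min'_mem (insert d s) (insert_nonempty d s)) with hmin | hmin
  · exact absurd (hmin ▸ minD_le hx : d ≤ x) (h x hx).not_ge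
  · exact hmin

noncomputable section

open scoped Classical

namespace ConvexBipartite

variable {a m : ℕ} (G : SimpleGraph (Fin a ⊕ Fin m))

def AdjLR (u : Fin a) (w : Fin m) : Prop := G.Adj (.inl u) (.inr w)

/-- Junk value `m` when `u` has no neighbour (and `rightEnd G u = 0`). -/
def leftEnd (u : Fin a) : ℕ := minD ((univ.filter (AdjLR G u)).image Fin.val) m

def rightEnd (u : Fin a) : ℕ := (univ.filter (AdjLR G u)).sup Fin.val

variable {G} {u : Fin a} {w w₀ w₁ w₂ : Fin m}

theorem leftEnd_le (h : AdjLR G u w) : leftEnd G u ≤ w :=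
  minD_le (mem_image_of_mem _ (mem_filter.2 ⟨mem_univ _, h⟩))

theorem le_rightEnd (h : AdjLR G u w) : (w : ℕ) ≤ rightEnd G u :=
  le_sup (f := Fin.val) (mem_filter.2 ⟨mem_univ _, h⟩)

theorem leftEnd_le_card (u : Fin a) : leftEnd G u ≤ m := minD_le_default _ _

theorem exists_adj_leftEnd (h : AdjLR G u w₀) : ∃ w, AdjLR G u w ∧ (w : ℕ) = leftEnd G u := by
  have := minD_mem (d := m) ⟨_, mem_image_of_mem Fin.val (mem_filter.2 ⟨mem_univ _, h⟩)⟩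
    (by simp)
  simpa [leftEnd, eq_comm] using this

theorem exists_adj_rightEnd (h : AdjLR G u w₀) : ∃ w, AdjLR G u w ∧ (w : ℕ) = rightEnd G u := by
  obtain ⟨w, hw, hsup⟩ := exists_mem_eq_sup _ ⟨w₀, mem_filter.2 ⟨mem_univ _, h⟩⟩ Fin.val
  exact ⟨w, (mem_filter.1 hw).2, hsup.symm⟩

theorem adj_of_le_of_le (hG : ConvexBipartite G) (h₁ : AdjLR G u w₁) (h₂ : AdjLR G u w₂)
    (hw₁ : w₁ ≤ w) (hw₂ : w ≤ w₂) : AdjLR G u w :=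
  hG.2.2 u w₁ w w₂ hw₁ hw₂ h₁ h₂

theorem adj_of_le_rightEnd (hG : ConvexBipartite G) (h₁ : AdjLR G u w₁) (hw₁ : w₁ ≤ w)
    (hw : (w : ℕ) ≤ rightEnd G u) : AdjLR G u w := by
  obtain ⟨w₂, h₂, hw₂⟩ := exists_adj_rightEnd h₁
  exact hG.adj_of_le_of_le h₁ h₂ hw₁ (Fin.le_def.2 (hw₂ ▸ hw))

theorem adj_iff (hG : ConvexBipartite G) (h₀ : AdjLR G u w₀) :
    AdjLR G u w ↔ leftEnd G u ≤ w ∧ (w : ℕ) ≤ rightEnd G u := by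
  refine ⟨fun h => ⟨leftEnd_le h, le_rightEnd h⟩, fun ⟨hl, hr⟩ => ?_⟩
  obtain ⟨w₁, h₁, hw₁⟩ := exists_adj_leftEnd h₀
  exact hG.adj_of_le_rightEnd h₁ (Fin.le_def.2 (hw₁ ▸ hl)) hr

variable (G) in
structure IsCDSPair (S : Finset (Fin a)) (T : Finset (Fin m)) : Prop where
  dominate_right : ∀ w, ∃ u ∈ S, AdjLR G u w
  dominate_left : ∀ u, ∃ t ∈ T, AdjLR G u t
  linked : ∀ t x, IsSuccIn T t x → ∃ u ∈ S, AdjLR G u t ∧ AdjLR G u x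

variable (G) in
def IsMinimalCDSPair (S : Finset (Fin a)) (T : Finset (Fin m)) : Prop :=
  S.Nonempty ∧ T.Nonempty ∧ IsMinimalCDS G ↑(S.disjSum T)

variable {S : Finset (Fin a)} {T : Finset (Fin m)}

theorem IsCDSPair.isDominatingSet (h : IsCDSPair G S T) : IsDominatingSet G ↑(S.disjSum T) := by
  rintro (u | w)
  · obtain ⟨t, ht, hadj⟩ := h.dominate_left u
    exact .inr ⟨.inr t, by simpa using ht, hadj.symm⟩
  · obtain ⟨u, hu, hadj⟩ := h.dominate_right w
    exact .inr ⟨.inl u, by simpa using hu, hadj⟩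

theorem IsCDSPair.connected (h : IsCDSPair G S T) (hT : T.Nonempty) :
    (G.induce ↑(S.disjSum T)).Connected := by
  set D : Set (Fin a ⊕ Fin m) := ↑(S.disjSum T)
  have hinr : ∀ {t}, t ∈ T → Sum.inr t ∈ D := fun ht => by simpa [D] using ht
  have hinl : ∀ {u}, u ∈ S → Sum.inl u ∈ D := fun hu => by simpa [D] using hu
  set root : D := ⟨_, hinr (T.min'_mem hT)⟩
  have hreach : ∀ t (ht : t ∈ T), (G.induce D).Reachable root ⟨_, hinr ht⟩ := by
    intro t
    induction t using WellFoundedLT.induction with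
    | _ t ih =>
    intro ht
    rcases (T.min'_le t ht).lt_or_eq with hlt | heq
    · obtain ⟨p, hp⟩ := exists_isSuccIn (T.min'_mem hT) ht hlt
      obtain ⟨u, hu, hup, hut⟩ := h.linked p t hp
      have hpu : (G.induce D).Adj ⟨_, hinr hp.1⟩ ⟨_, hinl hu⟩ := hup.symm
      have hut' : (G.induce D).Adj ⟨_, hinl hu⟩ ⟨_, hinr ht⟩ := hut
      exact ((ih p hp.2.2.1 hp.1).trans hpu.reachable).trans hut'.reachable
    · simp_rw [root, ← heq]
      rfl
  refine (SimpleGraph.connected_iff_exists_forall_reachable _).2 ⟨root, ?_⟩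
  rintro ⟨u | w, hv⟩
  · obtain ⟨t, ht, hadj⟩ := h.dominate_left u
    have hadj' : (G.induce D).Adj ⟨_, hinr ht⟩ ⟨_, hv⟩ := hadj.symm
    exact (hreach t ht).trans hadj'.reachable
  · exact hreach w (by simpa [D] using hv)

theorem IsCDSPair.isConnectedDominatingSet (h : IsCDSPair G S T) (hT : T.Nonempty) :
    IsConnectedDominatingSet G ↑(S.disjSum T) :=
  ⟨h.isDominatingSet, h.connected hT⟩

theorem isCDSPair_of_isConnectedDominatingSet (hG : ConvexBipartite G) (hS : S.Nonempty)
    (hT : T.Nonempty) (h : IsConnectedDominatingSet G ↑(S.disjSum T)) : IsCDSPair G S T := by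
  set D : Set (Fin a ⊕ Fin m) := ↑(S.disjSum T)
  obtain ⟨hdom, hconn⟩ := h
  have hnbr : ∀ v, ∃ d ∈ D, G.Adj d v := by
    intro v
    refine (hdom v).elim (fun hv => ?_) id
    obtain ⟨u₀, hu₀⟩ := hS
    obtain ⟨t₀, ht₀⟩ := hT
    have : Nontrivial D := ⟨⟨.inl u₀, by simpa [D]⟩, ⟨.inr t₀, by simpa [D]⟩, by simp⟩
    obtain ⟨⟨d, hd⟩, hadj⟩ := hconn.preconnected.exists_adj_of_nontrivial ⟨v, hv⟩
    exact ⟨d, hd, hadj.symm⟩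
  refine ⟨fun w => ?_, fun u => ?_, fun t x htx => ?_⟩
  · obtain ⟨u | w', hd, hadj⟩ := hnbr (.inr w)
    · exact ⟨u, by simpa [D] using hd, hadj⟩
    · exact absurd hadj (hG.2.1 w' w)
  · obtain ⟨u' | t, hd, hadj⟩ := hnbr (.inl u)
    · exact absurd hadj (hG.1 u' u)
    · exact ⟨t, by simpa [D] using hd, hadj.symm⟩
  obtain ⟨ht, hx, htx, hnext⟩ := htx
  obtain ⟨walk⟩ := hconn.preconnected (⟨.inr t, by simpa [D]⟩ : D) ⟨.inr x, by simpa [D]⟩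
  -- A walk from `t` to `x` leaves this set along an edge from some `s ≤ t` to a vertex of `S`
  -- with a neighbour in `T` after `t`, hence one at or after `x`.
  let below : Set D := {v | Sum.elim (fun u => ∀ s ∈ T, AdjLR G u s → s ≤ t) (· ≤ t) v.1}
  obtain ⟨⟨⟨⟨p, hp⟩, ⟨q, hq⟩⟩, hpq⟩, -, hpX, hqX⟩ :=
    walk.exists_boundary_dart below (show t ≤ t from le_rfl) htx.not_ge
  simp only [SimpleGraph.comap_adj, Function.Embedding.coe_subtype] at hpq
  rcases p with u | s <;> rcases q with u' | s'
  · exact absurd hpq (hG.1 u u')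
  · exact absurd (hpX s' (by simpa [D] using hq) hpq) hqX
  · simp only [below, Set.mem_ofPred_eq, Sum.elim_inl, not_forall, not_le] at hqX
    obtain ⟨s', hs', hadj', hts'⟩ := hqX
    have hst : s ≤ t := hpX
    exact ⟨u', by simpa [D] using hq, hG.adj_of_le_of_le hpq.symm hadj' hst hts'.le,
      hG.adj_of_le_of_le hpq.symm hadj' (hst.trans htx.le) (hnext s' hs' hts')⟩
  · exact absurd hpq (hG.2.1 s s')

theorem IsMinimalCDSPair.isCDSPair (hG : ConvexBipartite G) (h : IsMinimalCDSPair G S T) :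
    IsCDSPair G S T :=
  isCDSPair_of_isConnectedDominatingSet hG h.1 h.2.1 h.2.2.1

theorem IsMinimalCDSPair.not_isCDSPair_erase_right (h : IsMinimalCDSPair G S T) {t : Fin m}
    (ht : t ∈ T) (hne : (T.erase t).Nonempty) : ¬ IsCDSPair G S (T.erase t) := fun hcds =>
  h.2.2.2 _ (coe_ssubset.2 (disjSum_ssubset_disjSum_of_subset_of_ssubset Subset.rfl
    (erase_ssubset ht))) (hcds.isConnectedDominatingSet hne)

theorem IsMinimalCDSPair.not_isCDSPair_erase_left (h : IsMinimalCDSPair G S T) {q : Fin a}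
    (hq : q ∈ S) : ¬ IsCDSPair G (S.erase q) T := fun hcds =>
  h.2.2.2 _ (coe_ssubset.2 (disjSum_ssubset_disjSum_of_ssubset_of_subset (erase_ssubset hq)
    Subset.rfl)) (hcds.isConnectedDominatingSet h.2.1)

theorem eq_univ_of_isDominatingSet_empty_disjSum (hG : ConvexBipartite G)
    (h : IsDominatingSet G ↑((∅ : Finset (Fin a)).disjSum T)) : T = univ := by
  refine eq_univ_of_forall fun w => ?_
  rcases h (.inr w) with hw | ⟨u | w', hd, hadj⟩
  · simpa using hw
  · simp at hd
  · exact absurd hadj (hG.2.1 w' w)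

theorem eq_univ_of_isDominatingSet_disjSum_empty (hG : ConvexBipartite G)
    (h : IsDominatingSet G ↑(S.disjSum (∅ : Finset (Fin m)))) : S = univ := by
  refine eq_univ_of_forall fun u => ?_
  rcases h (.inl u) with hu | ⟨u' | w, hd, hadj⟩
  · simpa using hu
  · exact absurd hadj (hG.1 u' u)
  · simp at hd

section RightPart

variable (G S)

def beyond (c : ℕ) : Finset (Fin a) := univ.filter fun u => ∀ w, AdjLR G u w → c ≤ w

def minRightEnd (s : Finset (Fin a)) : ℕ := minD (s.image (rightEnd G)) m

def afterHead : List (Fin m) → ℕ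
  | [] => 0
  | t :: _ => t + 1

def reach : List (Fin m) → ℕ
  | [] => m
  | t :: _ => (S.filter (AdjLR G · t)).sup (rightEnd G)

/-- If the successor `x` of `t` came no later than this, `t` could be dropped from `T`: the
vertices seeing `t` but not its predecessor all reach `x`, and `S` links the predecessor to `x`. -/
def rightWindowLo : List (Fin m) → ℕ
  | [] => 0
  | t :: P => min (minRightEnd G ((beyond G (afterHead P)).filter (AdjLR G · t))) (reach G S P) + 1

/-- The vertex chosen after the head `t` of `P` is linked to `t` through `S`, and it dominates
every vertex whose neighbourhood lies after `t`. -/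
def rightWindowHi (P : List (Fin m)) : ℕ :=
  min (reach G S P) (minRightEnd G (beyond G (afterHead P)))

variable {G S}

theorem minRightEnd_anti {s s' : Finset (Fin a)} (h : s ⊆ s') :
    minRightEnd G s' ≤ minRightEnd G s :=
  le_minD (minD_le_default _ _) fun _ hy => minD_le (image_subset_image h hy)

theorem rightWindowHi_lt_rightWindowLo (P : List (Fin m)) (x : Fin m) :
    rightWindowHi G S P < rightWindowLo G S (x :: P) := by
  have := minRightEnd_anti (G := G) (filter_subset (AdjLR G · x) (beyond G (afterHead P)))
  simp only [rightWindowHi, rightWindowLo]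
  omega

theorem IsCDSPair.le_rightWindowHi (h : IsCDSPair G S T) {x : Fin m} (hx : x ∈ T)
    {P : List (Fin m)} (hP : IsPredList id T x P) : (x : ℕ) ≤ rightWindowHi G S P := by
  refine le_min ?_ (le_minD x.isLt.le ?_)
  · cases P with
    | nil => exact x.isLt.le
    | cons t P =>
      obtain ⟨u, hu, hut, hux⟩ := h.linked t x (hP.isSuccIn hx)
      exact (le_rightEnd hux).trans (le_sup (f := rightEnd G) (mem_filter.2 ⟨hu, hut⟩))
  · simp only [mem_image, beyond, mem_filter, mem_univ, true_and]
    rintro _ ⟨u, hu, rfl⟩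
    obtain ⟨s, hs, hadj⟩ := h.dominate_left u
    refine (Fin.le_def.1 (hP.le_of_notMem hs fun hsP => ?_)).trans (le_rightEnd hadj)
    cases P with
    | nil => exact List.not_mem_nil hsP
    | cons t P =>
      have : s ≤ t := hP.le_head hsP
      have : t + 1 ≤ (s : ℕ) := hu s hadj
      omega

theorem IsCDSPair.dominate_left_erase (hG : ConvexBipartite G) (h : IsCDSPair G S T)
    {x t : Fin m} (hx : x ∈ T) {P : List (Fin m)} (hP : IsPredList id T x (t :: P))
    (hdead : x ≤ minRightEnd G ((beyond G (afterHead P)).filter (AdjLR G · t))) :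
    ∀ u, ∃ s ∈ T.erase t, AdjLR G u s := by
  intro u
  obtain ⟨s, hs, hus⟩ := h.dominate_left u
  by_cases hst : s = t
  swap
  · exact ⟨s, mem_erase.2 ⟨hst, hs⟩, hus⟩
  subst hst
  by_contra! hno
  have hbeyond : u ∈ beyond G (afterHead P) := by
    simp only [beyond, mem_filter, mem_univ, true_and]
    intro w huw
    cases P with
    | nil => exact Nat.zero_le _
    | cons p P =>
      obtain ⟨hp, hps⟩ := hP.tail.head_mem
      by_contra! hwp
      exact hno p (mem_erase.2 ⟨hps.ne, hp⟩)
        (hG.adj_of_le_of_le huw hus (Fin.le_def.2 (Nat.lt_succ_iff.1 hwp)) hps.le)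
  have hxu : (x : ℕ) ≤ rightEnd G u :=
    hdead.trans (minD_le (mem_image_of_mem _ (mem_filter.2 ⟨hbeyond, hus⟩)))
  have hsx := hP.head_mem.2
  exact hno x (mem_erase.2 ⟨hsx.ne', hx⟩) (hG.adj_of_le_rightEnd hus hsx.le hxu)

theorem IsCDSPair.linked_erase (hG : ConvexBipartite G) (h : IsCDSPair G S T) {x t : Fin m}
    (hx : x ∈ T) {P : List (Fin m)} (hP : IsPredList id T x (t :: P))
    (hreach : x ≤ reach G S P) :
    ∀ p y, IsSuccIn (T.erase t) p y → ∃ u ∈ S, AdjLR G u p ∧ AdjLR G u y := by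
  intro p y hpy
  rcases isSuccIn_or_of_isSuccIn_erase hpy with hpy | ⟨hpt, hty⟩
  · exact h.linked p y hpy
  obtain rfl := (hP.isSuccIn hx).right_unique hty
  cases P with
  | nil => exact absurd (hP.tail.forall_le p hpt.1) hpt.2.2.1.not_ge
  | cons p' P =>
  obtain rfl := hpt.left_unique (hP.tail.isSuccIn hP.head_mem.1)
  have hpx : p < x := hpt.2.2.1.trans hty.2.2.1
  have hne : (S.filter (AdjLR G · p)).Nonempty := by
    by_contra hempty
    rw [not_nonempty_iff_eq_empty] at hempty
    simp only [reach, hempty, sup_empty, Nat.bot_eq_zero] at hreach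
    have := Fin.lt_def.1 hpx
    omega
  obtain ⟨u, hu, hsup⟩ := exists_mem_eq_sup _ hne (rightEnd G)
  obtain ⟨hu, hup⟩ := mem_filter.1 hu
  exact ⟨u, hu, hup, hG.adj_of_le_rightEnd hup hpx.le (hsup ▸ hreach)⟩

theorem IsMinimalCDSPair.rightWindowLo_le (hG : ConvexBipartite G) (hmin : IsMinimalCDSPair G S T)
    {x : Fin m} (hx : x ∈ T) {P : List (Fin m)} (hP : IsPredList id T x P) :
    rightWindowLo G S P ≤ x := by
  cases P with
  | nil => exact Nat.zero_le _
  | cons t P =>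
  by_contra! hlt
  have hbounds : (x : ℕ) ≤ minRightEnd G ((beyond G (afterHead P)).filter (AdjLR G · t)) ∧
      (x : ℕ) ≤ reach G S P := by
    simpa only [rightWindowLo, Nat.lt_succ_iff, le_min_iff] using hlt
  have h := hmin.isCDSPair hG
  obtain ⟨ht, htx⟩ := hP.head_mem
  exact hmin.not_isCDSPair_erase_right ht ⟨x, mem_erase.2 ⟨htx.ne', hx⟩⟩
    ⟨h.dominate_right, h.dominate_left_erase hG hx hP hbounds.1,
      h.linked_erase hG hx hP hbounds.2⟩

theorem card_filter_isMinimalCDSPair_right_le (hG : ConvexBipartite G) (S : Finset (Fin a)) :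
    (#(univ.filter (IsMinimalCDSPair G S)) : ℝ) ≤ 14 * 1.48 ^ m := by
  refine (card_le_of_forall_isPredList (κ := (id : Fin m → Fin m)) Function.injective_id
    Fin.val (rightWindowLo G S) (rightWindowHi G S)
    (fun P x _ _ => rightWindowHi_lt_rightWindowLo P x) _ fourteen_mul_pow_monotone
    (fun _ _ => one_add_mul_le_fourteen_mul_pow) _ ?_).trans_eq (by rw [Fintype.card_fin])
  simp only [mem_filter, mem_univ, true_and]
  intro T hmin x hx P hP
  exact ⟨hmin.rightWindowLo_le hG hx hP, (hmin.isCDSPair hG).le_rightWindowHi hx hP⟩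

end RightPart

section LeftPart

variable (G T)

def constraints : Finset (Fin m × Fin m) :=
  univ.filter fun z => z.1 = z.2 ∨ IsSuccIn T z.1 z.2

def Covers (u : Fin a) (z : Fin m × Fin m) : Prop := AdjLR G u z.1 ∧ AdjLR G u z.2

/-- The leftmost constraint not covered by `P` must be covered by a vertex listed later. -/
def leftWindowHi (P : List (Fin a)) : ℕ :=
  minD (((constraints T).filter fun z => ∀ q ∈ P, ¬ Covers G q z).image fun z => z.1.val) m

/-- Every vertex `q` covers a constraint that no other vertex of `S` covers; the vertices listed
after `q` end no earlier than `q` does, so they must start after that constraint. -/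
def leftWindowLo : List (Fin a) → ℕ
  | [] => 0
  | q :: P => minD (((constraints T).filter fun z =>
      Covers G q z ∧ ∀ p ∈ P, rightEnd G p < z.2).image fun z => z.1.val) m + 1

def leftEndLex (u : Fin a) : ℕ ×ₗ Fin a := toLex (leftEnd G u, u)

variable {G T}

theorem fst_le_snd_of_mem_constraints {z : Fin m × Fin m} (hz : z ∈ constraints T) :
    z.1 ≤ z.2 := by
  rcases (mem_filter.1 hz).2 with h | h
  · exact h.le
  · exact h.2.2.1.le

theorem IsCDSPair.exists_covers (h : IsCDSPair G S T) {z : Fin m × Fin m}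
    (hz : z ∈ constraints T) : ∃ u ∈ S, Covers G u z := by
  rcases (mem_filter.1 hz).2 with h' | h'
  · obtain ⟨u, hu, hadj⟩ := h.dominate_right z.1
    exact ⟨u, hu, hadj, h' ▸ hadj⟩
  · exact h.linked _ _ h'

theorem isCDSPair_of_forall_covers (hcov : ∀ z ∈ constraints T, ∃ u ∈ S, Covers G u z)
    (hdom : ∀ u, ∃ t ∈ T, AdjLR G u t) : IsCDSPair G S T where
  dominate_right w := by
    obtain ⟨u, hu, hcov, -⟩ := hcov (w, w) (by simp [constraints])
    exact ⟨u, hu, hcov⟩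
  dominate_left := hdom
  linked t x htx := hcov (t, x) (by simp [constraints, htx])

theorem IsMinimalCDSPair.exists_private_constraint (hG : ConvexBipartite G)
    (hmin : IsMinimalCDSPair G S T) {q : Fin a} (hq : q ∈ S) :
    ∃ z ∈ constraints T, Covers G q z ∧ ∀ u ∈ S, u ≠ q → ¬ Covers G u z := by
  by_contra! hshared
  have h := hmin.isCDSPair hG
  refine hmin.not_isCDSPair_erase_left hq
    (isCDSPair_of_forall_covers (fun z hz => ?_) h.dominate_left)
  obtain ⟨u, hu, hcov⟩ := h.exists_covers hz
  by_cases huq : u = q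
  · subst huq
    obtain ⟨u', hu', hne, hcov'⟩ := hshared z hz hcov
    exact ⟨u', mem_erase.2 ⟨hne, hu'⟩, hcov'⟩
  · exact ⟨u, mem_erase.2 ⟨huq, hu⟩, hcov⟩

theorem IsMinimalCDSPair.rightEnd_le_of_leftEnd_le (hG : ConvexBipartite G)
    (hmin : IsMinimalCDSPair G S T) {u v : Fin a} (hu : u ∈ S) (hv : v ∈ S) (huv : u ≠ v)
    (hl : leftEnd G u ≤ leftEnd G v) : rightEnd G u ≤ rightEnd G v := by
  by_contra! hr
  have h := hmin.isCDSPair hG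
  obtain ⟨_, -, hu₀⟩ := h.dominate_left u
  have hsub : ∀ w, AdjLR G v w → AdjLR G u w := fun w hw =>
    (hG.adj_iff hu₀).2 ⟨hl.trans (leftEnd_le hw), (le_rightEnd hw).trans hr.le⟩
  refine hmin.not_isCDSPair_erase_left hv
    (isCDSPair_of_forall_covers (fun z hz => ?_) h.dominate_left)
  obtain ⟨u', hu', hcov⟩ := h.exists_covers hz
  by_cases hu'v : u' = v
  · subst hu'v
    exact ⟨u, mem_erase.2 ⟨huv, hu⟩, hsub _ hcov.1, hsub _ hcov.2⟩
  · exact ⟨u', mem_erase.2 ⟨hu'v, hu'⟩, hcov⟩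

theorem leftEndLex_injective : Function.Injective (leftEndLex G) :=
  fun _ _ h => congrArg Prod.snd (toLex.injective h)

theorem leftEnd_le_of_leftEndLex_le {u v : Fin a} (h : leftEndLex G u ≤ leftEndLex G v) :
    leftEnd G u ≤ leftEnd G v :=
  Prod.Lex.monotone_fst _ _ h

theorem leftWindowHi_lt_leftWindowLo (P : List (Fin a)) (q : Fin a) :
    leftWindowHi G T P < leftWindowLo G T (q :: P) := by
  refine Nat.lt_succ_of_le (le_minD (minD_le_default _ _) ?_)
  simp only [mem_image, mem_filter]
  rintro _ ⟨z, ⟨hz, -, hzP⟩, rfl⟩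
  exact minD_le (mem_image_of_mem _ (mem_filter.2
    ⟨hz, fun p hp hcov => (le_rightEnd hcov.2).not_gt (hzP p hp)⟩))

theorem IsCDSPair.leftEnd_le_leftWindowHi (h : IsCDSPair G S T) {x : Fin a} {P : List (Fin a)}
    (hP : IsPredList (leftEndLex G) S x P) : leftEnd G x ≤ leftWindowHi G T P := by
  refine le_minD (leftEnd_le_card x) ?_
  simp only [mem_image, mem_filter]
  rintro _ ⟨z, ⟨hz, hzP⟩, rfl⟩
  obtain ⟨u, hu, hcov⟩ := h.exists_covers hz
  exact (leftEnd_le_of_leftEndLex_le (hP.le_of_notMem hu fun huP => hzP u huP hcov)).trans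
    (leftEnd_le hcov.1)

theorem IsMinimalCDSPair.leftWindowLo_le_leftEnd (hG : ConvexBipartite G)
    (hmin : IsMinimalCDSPair G S T) {x : Fin a} (hx : x ∈ S) {P : List (Fin a)}
    (hP : IsPredList (leftEndLex G) S x P) : leftWindowLo G T P ≤ leftEnd G x := by
  cases P with
  | nil => exact Nat.zero_le _
  | cons q P =>
  have h := hmin.isCDSPair hG
  obtain ⟨hq, hqx⟩ := hP.head_mem
  have hxq : x ≠ q := fun h => hqx.ne (h ▸ rfl)
  obtain ⟨z, hz, hqz, hpriv⟩ := hmin.exists_private_constraint hG hq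
  have hmissed : ∀ u ∈ S, u ≠ q → leftEnd G u ≤ z.1 → rightEnd G u < z.2 := by
    intro u hu huq hlu
    by_contra! hru
    obtain ⟨_, -, hu₀⟩ := h.dominate_left u
    have hz : (z.1 : ℕ) ≤ z.2 := fst_le_snd_of_mem_constraints hz
    exact hpriv u hu huq
      ⟨(hG.adj_iff hu₀).2 ⟨hlu, hz.trans hru⟩, (hG.adj_iff hu₀).2 ⟨hlu.trans hz, hru⟩⟩
  have hbefore : minD (((constraints T).filter fun z =>
      Covers G q z ∧ ∀ p ∈ P, rightEnd G p < z.2).image fun z => z.1.val) m ≤ z.1 := by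
    refine minD_le (mem_image_of_mem _ (mem_filter.2 ⟨hz, hqz, fun p hp => ?_⟩))
    obtain ⟨hpS, hpq⟩ := (hP.tail.1 p).1 hp
    exact hmissed p hpS (fun h => hpq.ne (h ▸ rfl))
      ((leftEnd_le_of_leftEndLex_le hpq.le).trans (leftEnd_le hqz.1))
  have hafter : (z.1 : ℕ) < leftEnd G x := by
    by_contra! hlx
    have := hmin.rightEnd_le_of_leftEnd_le hG hq hx hxq.symm (leftEnd_le_of_leftEndLex_le hqx.le)
    exact (hmissed x hx hxq hlx).not_ge ((le_rightEnd hqz.2).trans this)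
  simp only [leftWindowLo]
  omega

theorem card_filter_isMinimalCDSPair_left_le (hG : ConvexBipartite G) (T : Finset (Fin m)) :
    (#(univ.filter (IsMinimalCDSPair G · T)) : ℝ) ≤ 14 * 1.48 ^ a := by
  refine (card_le_of_forall_isPredList (leftEndLex_injective (G := G)) (leftEnd G)
    (leftWindowLo G T) (leftWindowHi G T) (fun P x _ _ => leftWindowHi_lt_leftWindowLo P x) _
    fourteen_mul_pow_monotone (fun _ _ => one_add_mul_le_fourteen_mul_pow) _ ?_).trans_eq
    (by rw [Fintype.card_fin])
  simp only [mem_filter, mem_univ, true_and]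
  intro S hmin x hx P hP
  exact ⟨hmin.leftWindowLo_le_leftEnd hG hx hP, (hmin.isCDSPair hG).leftEnd_le_leftWindowHi hP⟩

end LeftPart

theorem ncard_setOf_isMinimalCDS (G : SimpleGraph (Fin a ⊕ Fin m)) :
    {D : Set (Fin a ⊕ Fin m) | IsMinimalCDS G D}.ncard =
      #(univ.filter fun p : Finset (Fin a) × Finset (Fin m) =>
        IsMinimalCDS G ↑(p.1.disjSum p.2)) := by
  set φ : Finset (Fin a) × Finset (Fin m) → Set (Fin a ⊕ Fin m) := fun p => ↑(p.1.disjSum p.2)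
  have hφ : Function.Injective φ := fun p q h => by
    simpa [φ, Prod.ext_iff] using coe_injective h
  have hsurj : Function.Surjective φ := fun D =>
    ⟨(D.toFinset.toLeft, D.toFinset.toRight), by simp [φ, toLeft_disjSum_toRight]⟩
  rw [← Set.image_preimage_eq {D | IsMinimalCDS G D} hsurj, Set.ncard_image_of_injective _ hφ,
    ← Set.ncard_coe_finset]
  congr 1
  ext p
  simp [φ]

theorem card_filter_isMinimalCDS_not_nonempty_le (hG : ConvexBipartite G) :
    #(univ.filter fun p : Finset (Fin a) × Finset (Fin m) =>
      ¬ (p.1.Nonempty ∧ p.2.Nonempty) ∧ IsMinimalCDS G ↑(p.1.disjSum p.2)) ≤ 2 := by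
  refine (card_le_card (t := {(∅, univ), (univ, ∅)}) fun p hp => ?_).trans card_le_two
  obtain ⟨hempty, hmin⟩ := (mem_filter.1 hp).2
  rw [not_and_or, not_nonempty_iff_eq_empty, not_nonempty_iff_eq_empty] at hempty
  rcases p with ⟨S, T⟩
  rcases hempty with rfl | rfl
  · rw [eq_univ_of_isDominatingSet_empty_disjSum (T := T) hG hmin.1.1]
    exact mem_insert_self _ _
  · rw [eq_univ_of_isDominatingSet_disjSum_empty (S := S) hG hmin.1.1]
    exact mem_insert_of_mem (mem_singleton_self _)

theorem ncard_setOf_isMinimalCDS_le (hG : ConvexBipartite G) :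
    {D : Set (Fin a ⊕ Fin m) | IsMinimalCDS G D}.ncard ≤
      #(univ.filter fun p : Finset (Fin a) × Finset (Fin m) => IsMinimalCDSPair G p.1 p.2) + 2 := by
  rw [ncard_setOf_isMinimalCDS]
  refine (card_le_card fun p hp => ?_).trans ((card_union_le _ _).trans
    (Nat.add_le_add_left (card_filter_isMinimalCDS_not_nonempty_le hG) _))
  simp only [mem_union, mem_filter, mem_univ, true_and] at hp ⊢
  unfold IsMinimalCDSPair
  tauto

end ConvexBipartite

end

/-- There is a constant `C > 0` such that every convex bipartite graph on `n ≥ 1` vertices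
has at most `C * 1.7254 ^ n` minimal connected dominating sets. -/
theorem mcds_upper_bound_convex_bipartite :
    ∃ C : ℝ, 0 < C ∧
      ∀ n : ℕ, 0 < n → ∀ a m : ℕ, a + m = n →
        ∀ G : SimpleGraph (Fin a ⊕ Fin m), ConvexBipartite G →
          (({D : Set (Fin a ⊕ Fin m) | IsMinimalCDS G D}.ncard : ℝ)) ≤
            C * 1.7254 ^ n := by
  classical
  refine ⟨16, by norm_num, ?_⟩
  rintro n - a m rfl G hG
  have hleft := card_filter_prod_le_left _ hG.card_filter_isMinimalCDSPair_right_le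
  have hright := card_filter_prod_le_right _ hG.card_filter_isMinimalCDSPair_left_le
  simp only [Fintype.card_finset, Fintype.card_fin, Nat.cast_pow, Nat.cast_ofNat] at hleft hright
  have hpairs := le_fourteen_mul_pow_of_le_of_le (Nat.cast_nonneg _) hleft hright
  have hcount := Nat.cast_le (α := ℝ) |>.2 hG.ncard_setOf_isMinimalCDS_le
  push_cast at hcount
  have : (1 : ℝ) ≤ 1.7254 ^ (a + m) := one_le_pow₀ (by norm_num)
  linarith
end

section
/- Let G be a graph with at least one vertex and let D be a connected dominating set of G. Then D is a minimal connected dominating set of G if and only if for every v ∈ D, either v has a private neighbor with respect to D, or v is a cut vertex of the induced subgraph G[D] (i.e. G[D \ {v}] is disconnected). -/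
/-!
Connected domination is upward closed: a superset `S` of a connected dominating set `D'` is again
one, since every vertex of `S` lies in `D'` or is joined to it by an edge. So `D` is minimal as soon
as no `D \ {v}` is a connected dominating set, and `D \ {v}` fails to dominate exactly when `v` has
a private neighbor.
-/

section

variable {V : Type*} {G : SimpleGraph V}

theorem SimpleGraph.induce_connected_of_subset_of_forall_adj {D S : Set V} (hDS : D ⊆ S)
    (hD : (G.induce D).Connected) (hS : ∀ v ∈ S, v ∈ D ∨ ∃ u ∈ D, G.Adj u v) :
    (G.induce S).Connected := by
  obtain ⟨⟨u, hu⟩⟩ := hD.nonempty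
  refine G.induce_connected_of_patches u (hDS hu) fun {v} hv => ?_
  have hDv : (G.induce (D ∪ {v})).Connected := by
    rcases hS v hv with hvD | ⟨w, hw, hwv⟩
    · rwa [Set.union_singleton, Set.insert_eq_of_mem hvD]
    · exact G.connected_induce_union hD.preconnected .of_subsingleton hw rfl hwv
  exact ⟨D ∪ {v}, Set.union_subset hDS (Set.singleton_subset_iff.2 hv), .inl hu, .inr rfl,
    hDv.preconnected _ _⟩

theorem IsDominatingSet.mono {D S : Set V} (hD : IsDominatingSet G D) (hDS : D ⊆ S) :
    IsDominatingSet G S := fun x =>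
  (hD x).imp (@hDS x) fun ⟨u, hu, hux⟩ => ⟨u, hDS hu, hux⟩

theorem IsConnectedDominatingSet.mono {D S : Set V} (hD : IsConnectedDominatingSet G D)
    (hDS : D ⊆ S) : IsConnectedDominatingSet G S :=
  ⟨hD.1.mono hDS, G.induce_connected_of_subset_of_forall_adj hDS hD.2 fun v _ => hD.1 v⟩

theorem isMinimalCDS_iff_forall_not_sdiff_singleton {D : Set V}
    (hD : IsConnectedDominatingSet G D) :
    IsMinimalCDS G D ↔ ∀ v ∈ D, ¬ IsConnectedDominatingSet G (D \ {v}) := by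
  refine ⟨fun hmin v hv => hmin.2 _ (Set.sdiff_singleton_ssubset.2 hv), fun h => ⟨hD, ?_⟩⟩
  intro D' hD'D hD'
  obtain ⟨v, hvD, hvD'⟩ := Set.exists_of_ssubset hD'D
  exact h v hvD (hD'.mono (Set.subset_sdiff_singleton hD'D.subset hvD'))

theorem IsDominatingSet.sdiff_singleton_iff {D : Set V} (hD : IsDominatingSet G D) (v : V) :
    IsDominatingSet G (D \ {v}) ↔
      ∀ x, (x = v ∨ G.Adj v x) → x ∈ D \ {v} ∨ ∃ y ∈ D \ {v}, G.Adj y x := by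
  refine ⟨fun h x _ => h x, fun h x => ?_⟩
  rcases hD x with hxD | ⟨u, huD, hux⟩
  · by_cases hxv : x = v
    · exact h x (.inl hxv)
    · exact .inl ⟨hxD, hxv⟩
  · by_cases huv : u = v
    · exact h x (.inr (huv ▸ hux))
    · exact .inr ⟨u, ⟨huD, huv⟩, hux⟩

end

theorem mcds_iff_private_or_cut_general {V : Type*}
    (G : SimpleGraph V) (D : Set V) (hD : IsConnectedDominatingSet G D) :
    IsMinimalCDS G D ↔
      ∀ v ∈ D,
        (∃ x : V, (x = v ∨ G.Adj v x) ∧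
          ¬ (x ∈ D \ {v} ∨ ∃ y ∈ D \ {v}, G.Adj y x)) ∨
        ¬ (G.induce (D \ {v})).Connected := by
  rw [isMinimalCDS_iff_forall_not_sdiff_singleton hD]
  refine forall₂_congr fun v _ => ?_
  rw [IsConnectedDominatingSet, not_and_or, hD.1.sdiff_singleton_iff v]
  simp only [not_forall, exists_prop]

/-- A connected dominating set `D` of a graph `G` (with at least one vertex) is minimal
if and only if every `v ∈ D` has a private neighbor with respect to `D` (a vertex
dominated by `{v}` but not by `D \ {v}`) or is a cut vertex of the induced subgraph
`G[D]` (i.e. `G[D \ {v}]` is disconnected). -/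
theorem mcds_iff_private_or_cut {V : Type*} [Fintype V] [Nonempty V]
    (G : SimpleGraph V) (D : Set V) (hD : IsConnectedDominatingSet G D) :
    IsMinimalCDS G D ↔
      ∀ v ∈ D,
        (∃ x : V, (x = v ∨ G.Adj v x) ∧
          ¬ (x ∈ D \ {v} ∨ ∃ y ∈ D \ {v}, G.Adj y x)) ∨
        ¬ (G.induce (D \ {v})).Connected :=
  mcds_iff_private_or_cut_general G D hD
end

section
/- Let G = (U, W, E) be a convex bipartite graph with |U| ≥ 2 and |W| ≥ 2, with W ordered as w_1 < w_2 < ... < w_{|W|}, and let D be a minimal connected dominating set of G. Then |N(w_1) ∩ D| = 1, i.e. exactly one neighbor of the smallest vertex w_1 of W belongs to D. -/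
/-!
Two neighbors `u, u'` of `w₁` in `D` lie in `U`, so their neighborhoods are intervals of `W`
starting at `w₁`; hence one of them, say `N(u)`, is contained in the other. Then `D \ {u}` is
still a connected dominating set: whatever `u` dominated is dominated by `u'`, and in a walk
inside `D` every visit to `u` can be replaced by a visit to `u'`. This contradicts minimality,
so `D` has at most one neighbor of `w₁`; it has at least one because `D` dominates `w₁` and,
when `w₁ ∈ D`, is connected and contains a second vertex (it must dominate `w₂`).
-/

open SimpleGraph

namespace IsConnectedDominatingSet

variable {V : Type*} {G : SimpleGraph V} {D : Set V}

lemma exists_adj_mem (hD : IsConnectedDominatingSet G D) {v d : V} (hd : d ∈ D)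
    (hdv : d ≠ v) : ∃ z ∈ D, G.Adj v z := by
  rcases hD.1 v with hv | ⟨z, hz, hzv⟩
  · have : Nontrivial D := ⟨⟨⟨v, hv⟩, ⟨d, hd⟩, fun h => hdv (congrArg Subtype.val h).symm⟩⟩
    obtain ⟨z, hz⟩ := hD.2.preconnected.exists_adj_of_nontrivial ⟨v, hv⟩
    exact ⟨z, z.2, hz⟩
  · exact ⟨z, hz, hzv.symm⟩

lemma diff_singleton_of_neighborSet_subset_s13 (hD : IsConnectedDominatingSet G D) {u u' : V}
    (hu' : u' ∈ D) (hne : u ≠ u') (hN : G.neighborSet u ⊆ G.neighborSet u') :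
    IsConnectedDominatingSet G (D \ {u}) := by
  have hu'D : u' ∈ D \ {u} := ⟨hu', hne.symm⟩
  constructor
  · intro v
    rcases hD.1 v with hv | ⟨z, hz, hzv⟩
    · by_cases hvu : v = u
      · obtain ⟨z, hz, hvz⟩ := hD.exists_adj_mem hu' (hvu ▸ hne.symm)
        exact .inr ⟨z, ⟨hz, hvz.ne.symm.trans_eq hvu⟩, hvz.symm⟩
      · exact .inl ⟨hv, hvu⟩
    · by_cases hzu : z = u
      · exact .inr ⟨u', hu'D, hN (hzu ▸ hzv)⟩
      · exact .inr ⟨z, ⟨hz, hzu⟩, hzv⟩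
  · classical
    let f : G.induce D →g G.induce (D \ {u}) :=
      { toFun := fun x => if hx : (x : V) = u then ⟨u', hu'D⟩ else ⟨x, x.2, hx⟩
        map_rel' := by
          rintro ⟨x, hx⟩ ⟨y, hy⟩ hxy
          change G.Adj x y at hxy
          by_cases hxu : x = u <;> by_cases hyu : y = u <;> subst_vars
          · exact absurd hxy (G.irrefl)
          · simpa [hyu] using hN hxy
          · simpa [hxu] using (hN hxy.symm).symm
          · simpa [hxu, hyu] using hxy }
    refine hD.2.map f fun y => ⟨⟨y, y.2.1⟩, ?_⟩
    have hyu : (y : V) ≠ u := y.2.2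
    simp [f, hyu]

end IsConnectedDominatingSet

lemma IsMinimalCDS.not_neighborSet_subset {V : Type*} {G : SimpleGraph V} {D : Set V}
    (hD : IsMinimalCDS G D) {u u' : V} (hu : u ∈ D) (hu' : u' ∈ D) (hne : u ≠ u') :
    ¬ G.neighborSet u ⊆ G.neighborSet u' := fun hN =>
  hD.2 _ (Set.sdiff_singleton_ssubset.mpr hu)
    (hD.1.diff_singleton_of_neighborSet_subset_s13 hu' hne hN)

namespace ConvexBipartite

variable {a m : ℕ} {G : SimpleGraph (Fin a ⊕ Fin m)}

lemma exists_eq_inl_of_adj_inr (hG : ConvexBipartite G) {w : Fin m} {x : Fin a ⊕ Fin m}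
    (h : G.Adj (.inr w) x) : ∃ u, x = .inl u := by
  cases x with
  | inl u => exact ⟨u, rfl⟩
  | inr i => exact absurd h (hG.2.1 w i)

lemma neighborSet_inl_subset_iff (hG : ConvexBipartite G) {u v : Fin a} :
    G.neighborSet (.inl u) ⊆ G.neighborSet (.inl v) ↔
      ∀ i, G.Adj (.inl u) (.inr i) → G.Adj (.inl v) (.inr i) := by
  refine ⟨fun h i => @h (.inr i), ?_⟩
  rintro h (x | i) hx
  · exact absurd hx (hG.1 u x)
  · exact h i hx

lemma neighborSet_subset_or_subset_of_adj_min (hG : ConvexBipartite G) {w₁ : Fin m}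
    (hw₁ : ∀ w, w₁ ≤ w) {u v : Fin a} (hu : G.Adj (.inl u) (.inr w₁))
    (hv : G.Adj (.inl v) (.inr w₁)) :
    G.neighborSet (.inl u) ⊆ G.neighborSet (.inl v) ∨
      G.neighborSet (.inl v) ⊆ G.neighborSet (.inl u) := by
  simp only [hG.neighborSet_inl_subset_iff]
  by_contra! ⟨⟨i, hui, hvi⟩, ⟨j, hvj, huj⟩⟩
  rcases le_total i j with hij | hji
  · exact hvi (hG.2.2 v w₁ i j (hw₁ i) hij hv hvj)
  · exact huj (hG.2.2 u w₁ j i (hw₁ j) hji hu hui)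

end ConvexBipartite

theorem mcds_first_vertex_one_neighbor_general {a m : ℕ} (hm : 2 ≤ m)
    (G : SimpleGraph (Fin a ⊕ Fin m)) (hG : ConvexBipartite G)
    (D : Set (Fin a ⊕ Fin m)) (hD : IsMinimalCDS G D)
    (w₁ : Fin m) (hw₁ : ∀ w : Fin m, w₁ ≤ w) :
    (G.neighborSet (Sum.inr w₁) ∩ D).ncard = 1 := by
  have : Nontrivial (Fin m) := Fin.nontrivial_iff_two_le.mpr hm
  obtain ⟨w₂, hw₂⟩ := exists_ne w₁
  have hother : ∃ d ∈ D, d ≠ .inr w₁ := by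
    rcases hD.1.1 (.inr w₂) with hd | ⟨z, hz, hzw₂⟩
    · exact ⟨_, hd, by simpa using hw₂⟩
    · exact ⟨z, hz, by rintro rfl; exact hG.2.1 w₁ w₂ hzw₂⟩
  obtain ⟨d, hd, hdw₁⟩ := hother
  obtain ⟨d₀, hd₀, hw₁d₀⟩ := hD.1.exists_adj_mem hd hdw₁
  have hunique : (G.neighborSet (.inr w₁) ∩ D).Subsingleton := by
    rintro x ⟨hx, hxD⟩ y ⟨hy, hyD⟩
    by_contra hxy
    obtain ⟨u, rfl⟩ := hG.exists_eq_inl_of_adj_inr hx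
    obtain ⟨v, rfl⟩ := hG.exists_eq_inl_of_adj_inr hy
    rcases hG.neighborSet_subset_or_subset_of_adj_min hw₁ hx.symm hy.symm with h | h
    · exact hD.not_neighborSet_subset hxD hyD hxy h
    · exact hD.not_neighborSet_subset hyD hxD (Ne.symm hxy) h
  exact Set.ncard_eq_one.mpr ⟨d₀, hunique.eq_singleton_of_mem ⟨hw₁d₀, hd₀⟩⟩

/-- In a convex bipartite graph with `|U| ≥ 2` and `|W| ≥ 2`, every minimal connected
dominating set contains exactly one neighbor of the smallest vertex `w₁` of `W`. -/
theorem mcds_first_vertex_one_neighbor {a m : ℕ} (ha : 2 ≤ a) (hm : 2 ≤ m)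
    (G : SimpleGraph (Fin a ⊕ Fin m)) (hG : ConvexBipartite G)
    (D : Set (Fin a ⊕ Fin m)) (hD : IsMinimalCDS G D)
    (w₁ : Fin m) (hw₁ : ∀ w : Fin m, w₁ ≤ w) :
    (G.neighborSet (Sum.inr w₁) ∩ D).ncard = 1 :=
  mcds_first_vertex_one_neighbor_general hm G hG D hD w₁ hw₁
end

section
/- Let G = (U, W, E) be a convex bipartite graph with |U| ≥ 2 and |W| ≥ 2, and let D be a minimal connected dominating set of G. Then every vertex w ∈ W has at most 3 neighbors in D, i.e. |N(w) ∩ D| ≤ 3 for all w ∈ W. -/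
/-!
Let `A`, `B` be the neighbours of `w` in `D` whose intervals reach furthest to the left and to the
right. Every interval containing `w` lies in `I_A ∪ I_B`, so any other neighbour `u` of `w` in `D`
has `N(u) ⊆ N(A) ∪ N(B)`. Then `D \ {u}` is still dominating, and it is connected as soon as `A`
and `B` are joined inside it; by minimality, `u` separates `A` from `B` in `D`.
Two non-adjacent such vertices `u ≠ u'` cannot both be separators. Walk from `A` to `B` inside `D`,
keeping a walk from `A` to the current vertex that avoids `u` or `u'`, say `u'`. When the walk
enters `u` from `x`, the vertex `x` is adjacent to `A` or to `B`: in the first case `A x u` avoids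
`u'`, in the second the walk avoiding `u` extends to `B`. So at most one neighbour of `w` in `D`
besides `A` and `B` exists.
-/

namespace SimpleGraph

variable {V : Type*} {G : SimpleGraph V}

def ReachableWithin (G : SimpleGraph V) (s : Set V) (x y : V) : Prop :=
  ∃ (hx : x ∈ s) (hy : y ∈ s), (G.induce s).Reachable ⟨x, hx⟩ ⟨y, hy⟩

namespace ReachableWithin

variable {s : Set V} {x y z : V}

theorem refl (hx : x ∈ s) : G.ReachableWithin s x x :=
  ⟨hx, hx, .rfl⟩

theorem tail (h : G.ReachableWithin s x y) (hz : z ∈ s) (hyz : G.Adj y z) :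
    G.ReachableWithin s x z := by
  obtain ⟨hx, hy, hxy⟩ := h
  exact ⟨hx, hz, hxy.trans (show (G.induce s).Adj ⟨y, hy⟩ ⟨z, hz⟩ from hyz).reachable⟩

theorem induction_on {P : V → Prop} (h : G.ReachableWithin s x y) (hx : P x)
    (step : ∀ y z, y ∈ s → z ∈ s → G.Adj y z → P y → P z) : P y := by
  obtain ⟨hxs, hys, hxy⟩ := h
  suffices ∀ v : s, Relation.ReflTransGen (G.induce s).Adj ⟨x, hxs⟩ v → P v from
    this ⟨y, hys⟩ ((reachable_iff_reflTransGen _ _).1 hxy)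
  intro v hv
  induction hv with
  | refl => exact hx
  | tail _ hadj ih => exact step _ _ (Subtype.prop _) (Subtype.prop _) hadj ih

theorem exists_adj_of_ne (h : G.ReachableWithin s x y) (hne : x ≠ y) : ∃ z ∈ s, G.Adj x z := by
  refine h.induction_on (P := fun y => x ≠ y → ∃ z ∈ s, G.Adj x z) (fun h => (h rfl).elim) ?_ hne
  intro y z _ hz hyz ih _
  by_cases hxy : x = y
  · exact ⟨z, hz, hxy ▸ hyz⟩
  · exact ih hxy

end ReachableWithin

theorem Connected.reachableWithin {s : Set V} (h : (G.induce s).Connected) {x y : V}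
    (hx : x ∈ s) (hy : y ∈ s) : G.ReachableWithin s x y :=
  ⟨hx, hy, h.preconnected _ _⟩

theorem connected_induce_of_forall_reachableWithin {s : Set V} {a : V} (ha : a ∈ s)
    (h : ∀ y ∈ s, G.ReachableWithin s a y) : (G.induce s).Connected := by
  rw [connected_iff_exists_forall_reachable]
  exact ⟨⟨a, ha⟩, fun ⟨y, hy⟩ => (h y hy).2.2⟩

end SimpleGraph

open SimpleGraph

section MinimalCDS

variable {V : Type*} {G : SimpleGraph V} {D : Set V} {A B u u' : V}

theorem IsConnectedDominatingSet.diff_singleton (hD : IsConnectedDominatingSet G D) (hu : u ∈ D)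
    (hA : A ∈ D \ {u}) (hB : B ∈ D \ {u})
    (hcov : G.neighborSet u ⊆ G.neighborSet A ∪ G.neighborSet B)
    (hAB : G.ReachableWithin (D \ {u}) A B) : IsConnectedDominatingSet G (D \ {u}) := by
  have hneighbor (x : V) (hx : G.Adj u x) : ∃ d ∈ D \ {u}, G.Adj d x := by
    rcases hcov hx with h | h
    exacts [⟨A, hA, h⟩, ⟨B, hB, h⟩]
  refine ⟨fun v => ?_, connected_induce_of_forall_reachableWithin hA fun y hy => ?_⟩
  · rcases hD.1 v with hv | ⟨d, hd, hdv⟩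
    · by_cases hvu : v = u
      · subst hvu
        obtain ⟨d, hd, hvd⟩ :=
          (hD.2.reachableWithin hv hA.1).exists_adj_of_ne fun h => hA.2 h.symm
        exact Or.inr ⟨d, ⟨hd, hvd.ne'⟩, hvd.symm⟩
      · exact Or.inl ⟨hv, hvu⟩
    · by_cases hdu : d = u
      · exact Or.inr (hneighbor v (hdu ▸ hdv))
      · exact Or.inr ⟨d, ⟨hd, hdu⟩, hdv⟩
  · refine (hD.2.reachableWithin hA.1 hy.1).induction_on
      (P := fun y => y ≠ u → G.ReachableWithin (D \ {u}) A y) (fun _ => .refl hA) ?_ hy.2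
    intro x z _ hz hxz hPx hzu
    by_cases hxu : x = u
    · subst hxu
      rcases hcov hxz with h | h
      exacts [(ReachableWithin.refl hA).tail ⟨hz, hzu⟩ h, hAB.tail ⟨hz, hzu⟩ h]
    · exact (hPx hxu).tail ⟨hz, hzu⟩ hxz

theorem SimpleGraph.ReachableWithin.tail_diff_singleton {x y : V}
    (hx : G.ReachableWithin (D \ {u}) A x) (hy : y ∈ D) (hxy : G.Adj x y)
    (hA : A ∈ D \ {u'}) (hB : B ∈ D \ {u}) (hu : u ∈ D \ {u'}) (hnadj : ¬ G.Adj u' u)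
    (hcov : G.neighborSet u ⊆ G.neighborSet A ∪ G.neighborSet B) :
    G.ReachableWithin (D \ {u}) A y ∨ G.ReachableWithin (D \ {u'}) A y ∨
      G.ReachableWithin (D \ {u}) A B := by
  by_cases hyu : y = u
  · subst hyu
    have hx' : x ∈ D \ {u'} := ⟨hx.2.1.1, by rintro rfl; exact hnadj hxy⟩
    rcases hcov hxy.symm with h | h
    · exact Or.inr (Or.inl (((ReachableWithin.refl hA).tail hx' h).tail hu hxy))
    · exact Or.inr (Or.inr (hx.tail hB h.symm))
  · exact Or.inl (hx.tail ⟨hy, hyu⟩ hxy)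

theorem IsMinimalCDS.not_reachableWithin_diff_singleton (hD : IsMinimalCDS G D) (hu : u ∈ D)
    (hA : A ∈ D \ {u}) (hB : B ∈ D \ {u})
    (hcov : G.neighborSet u ⊆ G.neighborSet A ∪ G.neighborSet B) :
    ¬ G.ReachableWithin (D \ {u}) A B := fun hAB =>
  hD.2 _ (Set.sdiff_singleton_ssubset.2 hu) (hD.1.diff_singleton hu hA hB hcov hAB)

theorem IsMinimalCDS.eq_or_adj_of_neighborSet_subset (hD : IsMinimalCDS G D) (hA : A ∈ D)
    (hB : B ∈ D) (hu : u ∈ D \ {A, B}) (hu' : u' ∈ D \ {A, B})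
    (hcov : G.neighborSet u ⊆ G.neighborSet A ∪ G.neighborSet B)
    (hcov' : G.neighborSet u' ⊆ G.neighborSet A ∪ G.neighborSet B) :
    u = u' ∨ G.Adj u u' := by
  by_contra! ⟨hne, hnadj⟩
  have mem_diff {v x : V} (hv : v ∈ D \ {A, B}) (hx : x ∈ D) (hxAB : x ∈ ({A, B} : Set V)) :
      x ∈ D \ {v} :=
    ⟨hx, fun h => hv.2 (Set.mem_singleton_iff.1 h ▸ hxAB)⟩
  have hAu := mem_diff hu hA (Set.mem_insert A {B})
  have hBu := mem_diff hu hB (Set.mem_insert_of_mem A rfl)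
  have hAu' := mem_diff hu' hA (Set.mem_insert A {B})
  have hBu' := mem_diff hu' hB (Set.mem_insert_of_mem A rfl)
  have hsep := hD.not_reachableWithin_diff_singleton hu.1 hAu hBu hcov
  have hsep' := hD.not_reachableWithin_diff_singleton hu'.1 hAu' hBu' hcov'
  have : G.ReachableWithin (D \ {u}) A B ∨ G.ReachableWithin (D \ {u'}) A B := by
    refine (hD.1.2.reachableWithin hA hB).induction_on
      (P := fun y => G.ReachableWithin (D \ {u}) A y ∨ G.ReachableWithin (D \ {u'}) A y)
      (.inl (.refl hAu)) fun x y _ hy hxy => ?_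
    rintro (h | h)
    · rcases h.tail_diff_singleton hy hxy hAu' hBu ⟨hu.1, hne⟩ (fun h => hnadj h.symm) hcov
        with h | h | h
      exacts [.inl h, .inr h, (hsep h).elim]
    · rcases h.tail_diff_singleton hy hxy hAu hBu' ⟨hu'.1, Ne.symm hne⟩ hnadj hcov'
        with h | h | h
      exacts [.inr h, .inl h, (hsep' h).elim]
  exact this.elim hsep hsep'

end MinimalCDS

namespace ConvexBipartite

open Sum

variable {a m : ℕ} {G : SimpleGraph (Fin a ⊕ Fin m)}

theorem adj_inr_of_le_of_le (hG : ConvexBipartite G) (x : Fin a ⊕ Fin m) {i j k : Fin m}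
    (hij : i ≤ j) (hjk : j ≤ k) (hi : G.Adj x (inr i)) (hk : G.Adj x (inr k)) :
    G.Adj x (inr j) := by
  rcases x with u | l
  · exact hG.2.2 u i j k hij hjk hi hk
  · exact (hG.2.1 l i hi).elim

theorem exists_eq_inr_of_adj (hG : ConvexBipartite G) {w : Fin m} {v x : Fin a ⊕ Fin m}
    (hv : G.Adj v (inr w)) (hx : G.Adj v x) : ∃ t, x = inr t := by
  rcases v with u | l
  · rcases x with y | t
    · exact (hG.1 u y hx).elim
    · exact ⟨t, rfl⟩
  · exact (hG.2.1 l w hv).elim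

theorem not_adj_of_adj_inr (hG : ConvexBipartite G) {w : Fin m} {v v' : Fin a ⊕ Fin m}
    (hv : G.Adj v (inr w)) (hv' : G.Adj v' (inr w)) : ¬ G.Adj v v' := fun h => by
  obtain ⟨t, rfl⟩ := hG.exists_eq_inr_of_adj hv h
  exact hG.2.1 t w hv'

/-- `A` and `B` are the neighbours of `w` in `S` whose intervals reach furthest left and right. -/
theorem exists_neighborSet_subset_union (hG : ConvexBipartite G) {w : Fin m}
    {S : Set (Fin a ⊕ Fin m)} (hSw : S ⊆ G.neighborSet (inr w)) (hS : S.Nonempty) :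
    ∃ A ∈ S, ∃ B ∈ S, ∀ v ∈ S, G.neighborSet v ⊆ G.neighborSet A ∪ G.neighborSet B := by
  set T : Set (Fin m) := {t | ∃ v ∈ S, G.Adj v (inr t)}
  obtain ⟨v₀, hv₀⟩ := hS
  have hwT : w ∈ T := ⟨v₀, hv₀, (hSw hv₀).symm⟩
  obtain ⟨l, ⟨A, hA, hAl⟩, hl⟩ := T.exists_min_image id T.toFinite ⟨w, hwT⟩
  obtain ⟨r, ⟨B, hB, hBr⟩, hr⟩ := T.exists_max_image id T.toFinite ⟨w, hwT⟩
  refine ⟨A, hA, B, hB, fun v hv x hx => ?_⟩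
  obtain ⟨t, rfl⟩ := hG.exists_eq_inr_of_adj (hSw hv).symm hx
  have htT : t ∈ T := ⟨v, hv, hx⟩
  rcases le_total t w with htw | hwt
  · exact .inl (hG.adj_inr_of_le_of_le A (hl t htT) htw hAl (hSw hA).symm)
  · exact .inr (hG.adj_inr_of_le_of_le B hwt (hr t htT) (hSw hB).symm hBr)

end ConvexBipartite

theorem mcds_W_vertex_at_most_three_neighbors_general {a m : ℕ}
    (G : SimpleGraph (Fin a ⊕ Fin m)) (hG : ConvexBipartite G)
    (D : Set (Fin a ⊕ Fin m)) (hD : IsMinimalCDS G D) :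
    ∀ w : Fin m, (G.neighborSet (Sum.inr w) ∩ D).ncard ≤ 3 := by
  intro w
  by_contra! hN
  set N := G.neighborSet (Sum.inr w) ∩ D
  obtain ⟨A, hA, B, hB, hcov⟩ := hG.exists_neighborSet_subset_union (S := N) Set.inter_subset_left
    (Set.nonempty_of_ncard_ne_zero (by omega))
  have hpair : ({A, B} : Set _).ncard ≤ 2 :=
    (Set.ncard_insert_le A {B}).trans (by rw [Set.ncard_singleton])
  obtain ⟨u, hu, u', hu', hne⟩ :=
    (Set.one_lt_ncard (s := N \ {A, B})).1 (by have := Set.le_ncard_sdiff {A, B} N; omega)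
  rcases hD.eq_or_adj_of_neighborSet_subset hA.2 hB.2 ⟨hu.1.2, hu.2⟩ ⟨hu'.1.2, hu'.2⟩
    (hcov u hu.1) (hcov u' hu'.1) with h | h
  · exact hne h
  · exact hG.not_adj_of_adj_inr hu.1.1.symm hu'.1.1.symm h

/-- In a convex bipartite graph with `|U| ≥ 2` and `|W| ≥ 2`, every vertex `w ∈ W`
has at most `3` neighbors in a minimal connected dominating set `D`. -/
theorem mcds_W_vertex_at_most_three_neighbors {a m : ℕ} (ha : 2 ≤ a) (hm : 2 ≤ m)
    (G : SimpleGraph (Fin a ⊕ Fin m)) (hG : ConvexBipartite G)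
    (D : Set (Fin a ⊕ Fin m)) (hD : IsMinimalCDS G D) :
    ∀ w : Fin m, (G.neighborSet (Sum.inr w) ∩ D).ncard ≤ 3 :=
  mcds_W_vertex_at_most_three_neighbors_general G hG D hD
end

section
/- Let G = (U, W, E) be a convex bipartite graph with |U| ≥ 2 and |W| ≥ 2, let D be a minimal connected dominating set of G with |D ∩ U| ≥ 2, and let i ∈ D ∩ U be a vertex whose neighbor interval has the smallest right endpoint among all vertices of D ∩ U; write r for the vertex of W that is this right endpoint. If the set of neighbors of r belonging to D ∩ U is exactly {i, j} for some j ≠ i, then D ∩ N(i) ∩ N(j) ≠ ∅. -/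
/-!
Suppose no vertex of `D` is a common neighbor of `i` and `j`. The closed neighborhood of `i`
is then closed under the edges of `G[D]`: a vertex `u ∈ D ∩ U` adjacent to some `w ≤ r` of
`N(i)` has its interval reaching past `r` (by the choice of `i`), so by convexity it sees `r`,
i.e. `u ∈ {i, j}`; and `u = j` would make `w` a common neighbor in `D`. Hence `j`, which is
not in that closed neighborhood, cannot be reached from `i` inside `D`, contradicting the
connectivity of `G[D]`.
-/

open Sum

namespace ConvexBipartite

variable {a m : ℕ} {G : SimpleGraph (Fin a ⊕ Fin m)}

lemma exists_isGreatest_neighbor {u : Fin a} {w : Fin m} (huw : G.Adj (inl u) (inr w)) :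
    ∃ ru, IsGreatest {w | G.Adj (inl u) (inr w)} ru :=
  haveI : Nonempty (Fin m) := ⟨w⟩
  (Set.toFinite _).bddAbove.exists_isGreatest_of_nonempty ⟨w, huw⟩

lemma adj_of_le_of_forall_le_isGreatest (hG : ConvexBipartite G) {u : Fin a} {w r : Fin m}
    (huw : G.Adj (inl u) (inr w)) (hwr : w ≤ r)
    (hr : ∀ ru, IsGreatest {w | G.Adj (inl u) (inr w)} ru → r ≤ ru) :
    G.Adj (inl u) (inr r) :=
  have ⟨ru, hru⟩ := exists_isGreatest_neighbor huw
  hG.2.2 u w r ru hwr (hr ru hru) huw hru.1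

lemma mem_insert_neighborSet_of_adj (hG : ConvexBipartite G) {D : Set (Fin a ⊕ Fin m)}
    {i j : Fin a} {r : Fin m} (hr : IsGreatest {w | G.Adj (inl i) (inr w)} r)
    (hmin : ∀ x : Fin a, inl x ∈ D →
      ∀ rx : Fin m, IsGreatest {w | G.Adj (inl x) (inr w)} rx → r ≤ rx)
    (hnbhd : {x : Fin a | inl x ∈ D ∧ G.Adj (inl x) (inr r)} ⊆ {i, j})
    (hempty : ¬ (D ∩ G.neighborSet (inl i) ∩ G.neighborSet (inl j)).Nonempty)
    {x y : Fin a ⊕ Fin m} (hxD : x ∈ D) (hyD : y ∈ D)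
    (hx : x ∈ insert (inl i) (G.neighborSet (inl i))) (hxy : G.Adj x y) :
    y ∈ insert (inl i) (G.neighborSet (inl i)) := by
  obtain rfl | hix := hx
  · exact Or.inr hxy
  rcases y with u | w
  · rcases x with w | v
    · exact absurd hxy (hG.1 w u)
    have hur : G.Adj (inl u) (inr r) :=
      hG.adj_of_le_of_forall_le_isGreatest hxy.symm (hr.2 hix) (hmin u hyD)
    have hu : u ∈ ({i, j} : Set (Fin a)) := hnbhd ⟨hyD, hur⟩
    obtain rfl | rfl := hu
    · exact Set.mem_insert _ _
    · exact absurd ⟨inr v, ⟨hxD, hix⟩, hxy.symm⟩ hempty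
  · rcases x with u | v
    · exact absurd hix (hG.1 i u)
    · exact absurd hxy (hG.2.1 v w)

end ConvexBipartite

theorem mcds_degree_two_common_neighbor_in_D_general {a m : ℕ}
    (G : SimpleGraph (Fin a ⊕ Fin m)) (hG : ConvexBipartite G)
    (D : Set (Fin a ⊕ Fin m)) (hD : IsMinimalCDS G D)
    (i : Fin a) (hiD : Sum.inl i ∈ D)
    (r : Fin m) (hr : IsGreatest {w : Fin m | G.Adj (Sum.inl i) (Sum.inr w)} r)
    (hmin : ∀ x : Fin a, Sum.inl x ∈ D →
      ∀ rx : Fin m, IsGreatest {w : Fin m | G.Adj (Sum.inl x) (Sum.inr w)} rx → r ≤ rx)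
    (j : Fin a) (hij : j ≠ i)
    (hnbhd : {x : Fin a | Sum.inl x ∈ D ∧ G.Adj (Sum.inl x) (Sum.inr r)} = {i, j}) :
    (D ∩ G.neighborSet (Sum.inl i) ∩ G.neighborSet (Sum.inl j)).Nonempty := by
  by_contra hempty
  have hj : j ∈ {x : Fin a | inl x ∈ D ∧ G.Adj (inl x) (inr r)} :=
    hnbhd ▸ Set.mem_insert_of_mem i rfl
  have hjS : inl j ∉ insert (inl i) (G.neighborSet (inl i)) := by
    rintro (h | h)
    · exact hij (inl_injective h)
    · exact hG.1 i j h
  obtain ⟨p⟩ := hD.1.2.preconnected ⟨inl i, hiD⟩ ⟨inl j, hj.1⟩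
  obtain ⟨d, -, hd, hd'⟩ := p.exists_boundary_dart
    (Subtype.val ⁻¹' insert (inl i) (G.neighborSet (inl i))) (Set.mem_insert _ _) hjS
  exact hd' (hG.mem_insert_neighborSet_of_adj hr hmin hnbhd.subset hempty d.fst.2 d.snd.2 hd d.adj)

/-- Let `D` be a minimal connected dominating set of a convex bipartite graph with
`|U| ≥ 2`, `|W| ≥ 2` and `|D ∩ U| ≥ 2`, and let `i ∈ D ∩ U` have the smallest right
endpoint `r` among the neighbor intervals of the vertices of `D ∩ U`. If the neighbors
of `r` in `D ∩ U` are exactly `{i, j}` for some `j ≠ i`, then `D ∩ N(i) ∩ N(j) ≠ ∅`. -/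
theorem mcds_degree_two_common_neighbor_in_D {a m : ℕ} (ha : 2 ≤ a) (hm : 2 ≤ m)
    (G : SimpleGraph (Fin a ⊕ Fin m)) (hG : ConvexBipartite G)
    (D : Set (Fin a ⊕ Fin m)) (hD : IsMinimalCDS G D)
    (hDU : 2 ≤ (D ∩ Set.range (Sum.inl : Fin a → Fin a ⊕ Fin m)).ncard)
    (i : Fin a) (hiD : Sum.inl i ∈ D)
    (r : Fin m) (hr : IsGreatest {w : Fin m | G.Adj (Sum.inl i) (Sum.inr w)} r)
    (hmin : ∀ x : Fin a, Sum.inl x ∈ D →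
      ∀ rx : Fin m, IsGreatest {w : Fin m | G.Adj (Sum.inl x) (Sum.inr w)} rx → r ≤ rx)
    (j : Fin a) (hij : j ≠ i)
    (hnbhd : {x : Fin a | Sum.inl x ∈ D ∧ G.Adj (Sum.inl x) (Sum.inr r)} = {i, j}) :
    (D ∩ G.neighborSet (Sum.inl i) ∩ G.neighborSet (Sum.inl j)).Nonempty :=
  mcds_degree_two_common_neighbor_in_D_general G hG D hD i hiD r hr hmin j hij hnbhd
end

section
/- For every integer t ≥ 3 and every real number x ≥ 1.7254, one has x^{t+1} − x^t − x − (t − 1) > 0. Consequently, for every integer t ≥ 3, the unique positive real root of the polynomial x^{t+1} − x^t − x − (t − 1) is less than 1.7254, and the maximum over t ≥ 3 of these roots is attained at t = 3. -/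
/-!
Write `p t x = x ^ (t + 1) - x ^ t - x - (t - 1)`. Then `p (t + 1) x = p t x + (x ^ t (x - 1) ^ 2 - 1)`,
and the bracket is positive once `x ≥ 1.7` and `t ≥ 3`; so on `[1.7, ∞)` the polynomials increase
with `t`, and everything reduces to `t = 3`, where `p 3 (1.7254) > 0` is a numerical check.
On `[1, ∞)` each `p t` is strictly increasing while it is negative on `(0, 1]`, which gives the
unique positive root, and the monotonicity in `t` compares it with the root for `t = 3`.
-/

open Set

def branchingPoly (t : ℕ) (x : ℝ) : ℝ := x ^ (t + 1) - x ^ t - x - ((t : ℝ) - 1)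

lemma branchingPoly_succ (t : ℕ) (x : ℝ) :
    branchingPoly (t + 1) x = branchingPoly t x + (x ^ t * (x - 1) ^ 2 - 1) := by
  simp only [branchingPoly]
  push_cast
  ring

lemma branchingPoly_three (x : ℝ) : branchingPoly 3 x = x ^ 4 - x ^ 3 - x - 2 := by
  norm_num [branchingPoly]

lemma branchingPoly_neg {t : ℕ} (ht : 1 ≤ t) {x : ℝ} (hx₀ : 0 < x) (hx₁ : x ≤ 1) :
    branchingPoly t x < 0 := by
  have hpow : x ^ (t + 1) ≤ x ^ t := pow_le_pow_of_le_one hx₀.le hx₁ t.le_succ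
  have ht' : (1 : ℝ) ≤ t := by exact_mod_cast ht
  simp only [branchingPoly]
  linarith

lemma strictMonoOn_branchingPoly {t : ℕ} (ht : 1 ≤ t) : StrictMonoOn (branchingPoly t) (Ici 1) := by
  intro x (hx : 1 ≤ x) y _ hxy
  have hpow : x ^ t ≤ y ^ t := pow_le_pow_left₀ (by linarith) hxy.le t
  have hy : 1 < y ^ t := one_lt_pow₀ (by linarith) (by omega)
  -- `p t y - p t x = y ^ t (y - 1) - x ^ t (x - 1) - (y - x) ≥ (y ^ t - 1) (y - x)`
  have h₁ : 0 ≤ (y ^ t - x ^ t) * (x - 1) := mul_nonneg (by linarith) (by linarith)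
  have h₂ : 0 < (y ^ t - 1) * (y - x) := mul_pos (by linarith) (by linarith)
  simp only [branchingPoly, pow_succ]
  nlinarith

lemma one_lt_pow_mul_sub_one_sq {x : ℝ} (hx : 1.7 ≤ x) {t : ℕ} (ht : 3 ≤ t) :
    1 < x ^ t * (x - 1) ^ 2 :=
  calc (1 : ℝ) < 1.7 ^ 3 * (1.7 - 1) ^ 2 := by norm_num
    _ ≤ x ^ 3 * (x - 1) ^ 2 := by gcongr
    _ ≤ x ^ t * (x - 1) ^ 2 := by gcongr; linarith

lemma branchingPoly_three_le {x : ℝ} (hx : 1.7 ≤ x) {t : ℕ} (ht : 3 ≤ t) :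
    branchingPoly 3 x ≤ branchingPoly t x := by
  induction t, ht using Nat.le_induction with
  | base => rfl
  | succ t ht ih =>
    rw [branchingPoly_succ t]
    linarith [one_lt_pow_mul_sub_one_sq hx ht]

lemma branchingPoly_pos {t : ℕ} (ht : 3 ≤ t) {x : ℝ} (hx : 1.7254 ≤ x) :
    0 < branchingPoly t x := by
  have h₃ : 0 < branchingPoly 3 x := by
    rw [branchingPoly_three]
    nlinarith [sq_nonneg (x - 1.7254), sq_nonneg x, sq_nonneg (x + 1), sq_nonneg (x ^ 2 - 1)]
  linarith [branchingPoly_three_le (by linarith : (1.7 : ℝ) ≤ x) ht]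

lemma one_lt_of_branchingPoly_eq_zero {t : ℕ} (ht : 1 ≤ t) {ρ : ℝ} (hρ₀ : 0 < ρ)
    (hρ : branchingPoly t ρ = 0) : 1 < ρ := by
  by_contra! h
  exact (branchingPoly_neg ht hρ₀ h).ne hρ

lemma lt_of_branchingPoly_eq_zero {t : ℕ} (ht : 3 ≤ t) {ρ : ℝ} (hρ : branchingPoly t ρ = 0) :
    ρ < 1.7254 := by
  by_contra! h
  exact (branchingPoly_pos ht h).ne' hρ

lemma existsUnique_branchingPoly_eq_zero {t : ℕ} (ht : 3 ≤ t) :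
    ∃! ρ : ℝ, 0 < ρ ∧ branchingPoly t ρ = 0 := by
  have hcont : ContinuousOn (branchingPoly t) (Icc 1 1.7254) := by
    unfold branchingPoly
    fun_prop
  have h₁ : branchingPoly t 1 ≤ 0 := (branchingPoly_neg (by omega) one_pos le_rfl).le
  have h₂ : 0 ≤ branchingPoly t 1.7254 := (branchingPoly_pos ht le_rfl).le
  obtain ⟨ρ, hρI, hρ⟩ := intermediate_value_Icc (by norm_num) hcont ⟨h₁, h₂⟩
  refine ⟨ρ, ⟨by linarith [hρI.1], hρ⟩, fun σ ⟨hσ₀, hσ⟩ => ?_⟩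
  have hσ₁ := one_lt_of_branchingPoly_eq_zero (by omega) hσ₀ hσ
  exact (strictMonoOn_branchingPoly (by omega)).injOn hσ₁.le hρI.1 (hσ.trans hρ.symm)

lemma le_of_branchingPoly_eq_zero {t : ℕ} (ht : 3 ≤ t) {ρ ρ₃ : ℝ} (hρ₀ : 0 < ρ)
    (hρ : branchingPoly t ρ = 0) (hρ₃₀ : 0 < ρ₃) (hρ₃ : branchingPoly 3 ρ₃ = 0) : ρ ≤ ρ₃ := by
  have hmono₃ := strictMonoOn_branchingPoly (t := 3) (by norm_num)
  have hρ₃₁ := one_lt_of_branchingPoly_eq_zero (by norm_num) hρ₃₀ hρ₃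
  have hρ₃_ge : 1.7 ≤ ρ₃ := by
    refine (hmono₃.le_iff_le (by norm_num : (1 : ℝ) ≤ 1.7) hρ₃₁.le).mp ?_
    rw [hρ₃, branchingPoly_three]
    norm_num
  refine ((strictMonoOn_branchingPoly (t := t) (by omega)).le_iff_le
    (one_lt_of_branchingPoly_eq_zero (by omega) hρ₀ hρ).le hρ₃₁.le).mp ?_
  rw [hρ, ← hρ₃]
  exact branchingPoly_three_le hρ₃_ge ht

/-- Branching-number estimate for the branching vector `(t, t+1, …, t+1, 1)` with
characteristic polynomial `p(x) = x^(t+1) - x^t - x - (t-1)`: for every `t ≥ 3`,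
`p(x) > 0` whenever `x ≥ 1.7254`; consequently `p` has a unique positive real root,
this root is less than `1.7254`, and the maximum over `t ≥ 3` of these roots is
attained at `t = 3`. -/
theorem branching_number_step6 :
    (∀ t : ℕ, 3 ≤ t → ∀ x : ℝ, 1.7254 ≤ x →
      0 < x ^ (t + 1) - x ^ t - x - ((t : ℝ) - 1)) ∧
    (∀ t : ℕ, 3 ≤ t →
      ∃! ρ : ℝ, 0 < ρ ∧ ρ ^ (t + 1) - ρ ^ t - ρ - ((t : ℝ) - 1) = 0) ∧
    (∀ t : ℕ, 3 ≤ t → ∀ ρ : ℝ,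
      0 < ρ → ρ ^ (t + 1) - ρ ^ t - ρ - ((t : ℝ) - 1) = 0 → ρ < 1.7254) ∧
    (∀ t : ℕ, 3 ≤ t → ∀ ρ ρ₃ : ℝ,
      0 < ρ → ρ ^ (t + 1) - ρ ^ t - ρ - ((t : ℝ) - 1) = 0 →
      0 < ρ₃ → ρ₃ ^ 4 - ρ₃ ^ 3 - ρ₃ - 2 = 0 → ρ ≤ ρ₃) :=
  ⟨fun _ ht _ hx => branchingPoly_pos ht hx,
   fun _ ht => existsUnique_branchingPoly_eq_zero ht,
   fun _ ht _ _ hρ => lt_of_branchingPoly_eq_zero ht hρ,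
   fun _ ht _ _ hρ₀ hρ hρ₃₀ hρ₃ =>
     le_of_branchingPoly_eq_zero ht hρ₀ hρ hρ₃₀ ((branchingPoly_three _).trans hρ₃)⟩
end
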